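/- arXiv:math/0610260 — 11 statements merged into one kernel-verified Lean document; each statement's English description precedes it below -/
import Mathlib

section
/- Let A be a finite skeletal category in which the only idempotent endomorphisms are identities. Then A has Möbius inversion, and its Möbius function is given by μ(a,b) = ∑ (−1)^n / (|Aut(a_0)|·|Aut(a_1)|⋯|Aut(a_n)|), where Aut(a) denotes the automorphism group of the object a, and the sum runs over all n ≥ 0 and all n-paths a = a_0 → a_1 → ⋯ → a_n = b in A for which the objects a_0, …, a_n are pairwise distinct. -/
open CategoryTheory


lemma pow_idem_of_finite {M : Type*} [Monoid M] [Finite M] (x : M) :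
    ∃ n : ℕ, 0 < n ∧ x ^ n * x ^ n = x ^ n := by
  obtain ⟨i, j, hij, h⟩ := Finite.exists_ne_map_eq_of_infinite (fun n : ℕ => x ^ n)
  wlog hlt : i < j generalizing i j
  · exact this j i hij.symm h.symm (by omega)
  set k := j - i with hk
  have hk0 : 0 < k := by omega
  have hstep : ∀ m, i ≤ m → x ^ (m + k) = x ^ m := by
    intro m hm
    have h1 : m + k = j + (m - i) := by omega
    have h2 : m = i + (m - i) := by omega
    rw [h1, pow_add, ← h, ← pow_add, ← h2]
  have key : ∀ t m, i ≤ m → x ^ (m + t * k) = x ^ m := by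
    intro t
    induction t with
    | zero => simp
    | succ t ih =>
      intro m hm
      rw [show m + (t+1) * k = (m + t * k) + k by ring, hstep _ (by omega), ih m hm]
  refine ⟨k * (i + 1), by positivity, ?_⟩
  rw [← pow_add, show k*(i+1)+k*(i+1) = k*(i+1) + (i+1)*k by ring]
  exact key (i+1) (k * (i+1)) (by nlinarith)

section Cat
variable {A : Type*} [Category A] [∀ a b : A, Fintype (a ⟶ b)]

lemma endo_isIso (idem : ∀ (a : A) (f : a ⟶ a), f ≫ f = f → f = 𝟙 a)
    {a : A} (f : a ⟶ a) : IsIso f := by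
  haveI : Finite (End a) := Finite.of_fintype (a ⟶ a)
  let e : End a := f
  obtain ⟨n, hn, hidem⟩ := pow_idem_of_finite (M := End a) e
  have h1 : e ^ n = 1 := by
    apply idem a (e ^ n)
    simpa [End.mul_def] using hidem
  rw [← isUnit_iff_isIso]
  exact IsUnit.of_pow_eq_one h1 (by omega)

lemma eq_of_hom_hom (skel : Skeletal A)
    (idem : ∀ (a : A) (f : a ⟶ a), f ≫ f = f → f = 𝟙 a)
    {a b : A} (f : a ⟶ b) (g : b ⟶ a) : a = b := by
  have : IsIso (f ≫ g) := endo_isIso idem _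
  set g' : b ⟶ a := g ≫ inv (f ≫ g) with hg'
  have h1 : f ≫ g' = 𝟙 a := by rw [hg', ← Category.assoc, IsIso.hom_inv_id]
  have h2 : g' ≫ f = 𝟙 b := by
    apply idem
    calc (g' ≫ f) ≫ g' ≫ f = g' ≫ (f ≫ g') ≫ f := by simp only [Category.assoc]
    _ = g' ≫ f := by rw [h1, Category.id_comp]
  exact skel ⟨⟨f, g', h1, h2⟩⟩

lemma autCard (idem : ∀ (a : A) (f : a ⟶ a), f ≫ f = f → f = 𝟙 a)
    (x : A) : (Nat.card (Aut x) : ℚ) = (Fintype.card (x ⟶ x) : ℚ) := by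
  congr 1
  rw [← Nat.card_eq_fintype_card]
  refine Nat.card_eq_of_bijective (fun i => i.hom) ⟨fun i j h => Iso.ext h, fun f => ?_⟩
  have := endo_isIso idem f
  exact ⟨asIso f, rfl⟩
end Cat

lemma snoc_injective {α : Type*} {n : ℕ} {o : Fin n → α} {x : α}
    (ho : Function.Injective o) (hx : x ∉ Set.range o) :
    Function.Injective (Fin.snoc o x : Fin (n+1) → α) := by
  intro i j hij
  induction i using Fin.lastCases with
  | last =>
    induction j using Fin.lastCases with
    | last => rfl
    | cast j =>
      rw [Fin.snoc_last, Fin.snoc_castSucc] at hij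
      exact absurd ⟨j, hij.symm⟩ hx
  | cast i =>
    induction j using Fin.lastCases with
    | last =>
      rw [Fin.snoc_last, Fin.snoc_castSucc] at hij
      exact absurd ⟨i, hij⟩ hx
    | cast j =>
      rw [Fin.snoc_castSucc, Fin.snoc_castSucc] at hij
      exact congrArg _ (ho hij)

lemma snoc_injective_iff {α : Type*} {n : ℕ} {o : Fin n → α} {x : α} :
    Function.Injective (Fin.snoc o x : Fin (n+1) → α) ↔
      Function.Injective o ∧ x ∉ Set.range o := by
  constructor
  · intro h
    constructor
    · intro i j hij
      have := h (a₁ := i.castSucc) (a₂ := j.castSucc)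
        (by rwa [Fin.snoc_castSucc, Fin.snoc_castSucc])
      exact Fin.castSucc_injective _ this
    · rintro ⟨i, hi⟩
      have := h (a₁ := i.castSucc) (a₂ := Fin.last n)
        (by rw [Fin.snoc_castSucc, Fin.snoc_last, hi])
      exact absurd this (Fin.ne_last_of_lt (Fin.castSucc_lt_last i))
  · exact fun h => snoc_injective h.1 h.2

section Cat2
variable {A : Type*} [Category A] [∀ a b : A, Fintype (a ⟶ b)]

lemma chainHom {n : ℕ} (o : Fin (n+1) → A)
    (h : ∀ i : Fin n, Nonempty (o i.castSucc ⟶ o i.succ)) :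
    ∀ j i : Fin (n+1), i ≤ j → Nonempty (o i ⟶ o j) := by
  intro j
  induction j using Fin.induction with
  | zero =>
    intro i hi
    rw [Fin.le_zero_iff] at hi
    subst hi; exact ⟨𝟙 _⟩
  | succ j ih =>
    intro i hi
    by_cases hij : i = j.succ
    · subst hij; exact ⟨𝟙 _⟩
    · have hv : i.val ≠ j.val + 1 := fun hv => hij (Fin.ext (by simpa using hv))
      have : i ≤ j.castSucc := by
        rw [Fin.le_def] at hi ⊢
        simp only [Fin.val_succ] at hi
        simp only [Fin.coe_castSucc]
        omega
      obtain ⟨f⟩ := ih i this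
      obtain ⟨g⟩ := h j
      exact ⟨f ≫ g⟩

lemma snoc_extend_inj (skel : Skeletal A)
    (idem : ∀ (a : A) (f : a ⟶ a), f ≫ f = f → f = 𝟙 a)
    {n : ℕ} {o : Fin (n+1) → A}
    (h : ∀ i : Fin n, Nonempty (o i.castSucc ⟶ o i.succ))
    (ho : Function.Injective o)
    {c : A} (hc : Nonempty (o (Fin.last n) ⟶ c)) (hne : o (Fin.last n) ≠ c) :
    Function.Injective (Fin.snoc o c : Fin (n+2) → A) := by
  apply snoc_injective ho
  rintro ⟨j, hj⟩
  obtain ⟨f⟩ := chainHom o h (Fin.last n) j (Fin.le_last j)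
  obtain ⟨g⟩ := hc
  have g' : o (Fin.last n) ⟶ o j := by rw [hj]; exact g
  have hoj : o j = o (Fin.last n) := eq_of_hom_hom skel idem f g'
  have : j = Fin.last n := ho hoj
  exact hne (this ▸ hj)

lemma cons_extend_inj (skel : Skeletal A)
    (idem : ∀ (a : A) (f : a ⟶ a), f ≫ f = f → f = 𝟙 a)
    {n : ℕ} {o : Fin (n+1) → A}
    (h : ∀ i : Fin n, Nonempty (o i.castSucc ⟶ o i.succ))
    (ho : Function.Injective o)
    {x : A} (hx : Nonempty (x ⟶ o 0)) (hne : x ≠ o 0) :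
    Function.Injective (Fin.cons x o : Fin (n+2) → A) := by
  rw [Fin.cons_injective_iff]
  refine ⟨?_, ho⟩
  rintro ⟨j, hj⟩
  obtain ⟨f⟩ := hx
  obtain ⟨g⟩ := chainHom o h j 0 (Fin.zero_le j)
  have f' : o j ⟶ o 0 := by rw [hj]; exact f
  have h0j : o 0 = o j := eq_of_hom_hom skel idem g f'
  have : (0 : Fin (n+1)) = j := ho h0j
  exact hne (by rw [← this] at hj; exact hj.symm)

end Cat2

open scoped Classical

noncomputable section Defs
variable {A : Type*} [Category A] [Fintype A] [∀ a b : A, Fintype (a ⟶ b)]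

def gQ (x : A) : ℚ := Fintype.card (x ⟶ x)
def zQ (x y : A) : ℚ := Fintype.card (x ⟶ y)

lemma gQ_ne (x : A) : gQ x ≠ 0 := by
  have : 0 < Fintype.card (x ⟶ x) := Fintype.card_pos_iff.mpr ⟨𝟙 x⟩
  simp only [gQ]
  positivity

lemma zQ_nonempty {x y : A} (h : zQ x y ≠ 0) : Nonempty (x ⟶ y) := by
  rw [zQ] at h
  have : Fintype.card (x ⟶ y) ≠ 0 := by exact_mod_cast h
  exact Fintype.card_pos_iff.mp (Nat.pos_of_ne_zero this)

def Wt (n : ℕ) (o : Fin (n+1) → A) : ℚ :=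
  (∏ i : Fin n, zQ (o i.castSucc) (o i.succ)) * ∏ i : Fin (n+1), (gQ (o i))⁻¹

def Fn (n : ℕ) (a b : A) : ℚ :=
  ∑ o : Fin (n+1) → A,
    if o 0 = a ∧ o (Fin.last n) = b ∧ Function.Injective o then Wt n o else 0

lemma Fn_zero_of_le {n : ℕ} (h : Fintype.card A ≤ n) (a b : A) : Fn n a b = 0 := by
  rw [Fn]
  apply Finset.sum_eq_zero
  intro o _
  rw [if_neg]
  rintro ⟨-, -, hinj⟩
  have := Fintype.card_le_of_injective o hinj
  rw [Fintype.card_fin] at this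
  omega

lemma Fn_zero' (a c : A) : Fn 0 a c = if a = c then (gQ a)⁻¹ else 0 := by
  rw [Fn]
  rw [← ((Equiv.funUnique (Fin 1) A).symm.sum_comp
    (fun o : Fin 1 → A =>
      if o 0 = a ∧ o (Fin.last 0) = c ∧ Function.Injective o then Wt 0 o else 0))]
  have : ∀ x : A,
      (if x = a ∧ x = c then (gQ x)⁻¹ else 0)
        = (fun o : Fin 1 → A =>
            if o 0 = a ∧ o (Fin.last 0) = c ∧ Function.Injective o then Wt 0 o else 0)
          ((Equiv.funUnique (Fin 1) A).symm x) := by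
    intro x
    have hinj : Function.Injective (fun _ : Fin 1 => x) := fun i j _ => Subsingleton.elim i j
    simp only [Equiv.funUnique_symm_apply, uniqueElim_const, Wt]
    by_cases h : x = a ∧ x = c
    · rw [if_pos h, if_pos ⟨h.1, h.2, hinj⟩]
      simp
    · rw [if_neg h, if_neg]
      rintro ⟨h1, h2, -⟩
      exact h ⟨h1, h2⟩
  rw [← Finset.sum_congr rfl (fun x _ => this x)]
  by_cases hac : a = c
  · subst hac
    rw [Finset.sum_eq_single a]
    · rw [if_pos ⟨rfl, rfl⟩, if_pos rfl]
    · intro b _ hb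
      rw [if_neg]
      rintro ⟨h1, -⟩
      exact hb h1
    · intro h; exact absurd (Finset.mem_univ _) h
  · rw [if_neg hac]
    apply Finset.sum_eq_zero
    intro x _
    rw [if_neg]
    rintro ⟨h1, h2⟩
    exact hac (h1 ▸ h2 ▸ rfl)

lemma mu_term (idem : ∀ (a : A) (f : a ⟶ a), f ≫ f = f → f = 𝟙 a) (n : ℕ) (a b : A) :
    (∑ p : (Σ o : Fin (n + 1) → A, ∀ i : Fin n, (o i.castSucc ⟶ o i.succ)),
      if p.1 0 = a ∧ p.1 (Fin.last n) = b ∧ Function.Injective p.1 then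
        (-1 : ℚ) ^ n / ∏ i : Fin (n + 1), (Nat.card (Aut (p.1 i)) : ℚ)
      else 0) = (-1 : ℚ) ^ n * Fn n a b := by
  rw [← Finset.univ_sigma_univ, Finset.sum_sigma, Fn, Finset.mul_sum]
  refine Finset.sum_congr rfl fun o _ => ?_
  by_cases hcond : o 0 = a ∧ o (Fin.last n) = b ∧ Function.Injective o
  · simp only [if_pos hcond]
    rw [Finset.sum_const, Finset.card_univ, Fintype.card_pi, nsmul_eq_mul, Wt]
    have haut : (∏ i : Fin (n+1), (Nat.card (Aut (o i)) : ℚ))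
        = ∏ i : Fin (n+1), gQ (o i) :=
      Finset.prod_congr rfl fun i _ => by rw [autCard idem, gQ]
    rw [haut, div_eq_mul_inv, ← Finset.prod_inv_distrib]
    have hz : ((∏ i : Fin n, Fintype.card (o i.castSucc ⟶ o i.succ) : ℕ) : ℚ)
        = ∏ i : Fin n, zQ (o i.castSucc) (o i.succ) := by
      push_cast [zQ]; rfl
    rw [hz]
    ring
  · simp only [if_neg hcond, Finset.sum_const_zero, mul_zero]

lemma mu_eq (idem : ∀ (a : A) (f : a ⟶ a), f ≫ f = f → f = 𝟙 a)
    (μ : A → A → ℚ)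
    (hμ : ∀ a b : A, μ a b =
      ∑' n : ℕ,
        ∑ p : (Σ o : Fin (n + 1) → A, ∀ i : Fin n, (o i.castSucc ⟶ o i.succ)),
          if p.1 0 = a ∧ p.1 (Fin.last n) = b ∧ Function.Injective p.1 then
            (-1 : ℚ) ^ n / ∏ i : Fin (n + 1), (Nat.card (Aut (p.1 i)) : ℚ)
          else 0) (a b : A) :
    μ a b = ∑ n ∈ Finset.range (Fintype.card A), (-1:ℚ)^n * Fn n a b := by
  rw [hμ a b]
  rw [tsum_eq_sum (s := Finset.range (Fintype.card A)) ?h0]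
  · exact Finset.sum_congr rfl fun n _ => mu_term idem n a b
  case h0 =>
    intro n hn
    rw [mu_term idem n a b, Fn_zero_of_le (by simp only [Finset.mem_range, not_lt] at hn; omega) a b,
      mul_zero]

end Defs

noncomputable section Steps
variable {A : Type*} [Category A] [Fintype A] [∀ a b : A, Fintype (a ⟶ b)]

lemma Wt_snoc (n : ℕ) (o : Fin (n+1) → A) (c : A) :
    Wt (n+1) (Fin.snoc o c) = Wt n o * zQ (o (Fin.last n)) c * (gQ c)⁻¹ := by
  rw [Wt, Wt, Fin.prod_univ_castSucc (f := fun i : Fin (n+1) =>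
      zQ ((Fin.snoc o c : Fin (n+2) → A) i.castSucc) ((Fin.snoc o c : Fin (n+2) → A) i.succ)),
    Fin.prod_univ_castSucc (f := fun i : Fin (n+2) => (gQ ((Fin.snoc o c : Fin (n+2) → A) i))⁻¹)]
  simp only [Fin.succ_castSucc, Fin.snoc_castSucc, Fin.succ_last, Fin.snoc_last]
  ring

lemma Wt_cons (n : ℕ) (o : Fin (n+1) → A) (x : A) :
    Wt (n+1) (Fin.cons x o) = zQ x (o 0) * Wt n o * (gQ x)⁻¹ := by
  rw [Wt, Wt, Fin.prod_univ_succ (f := fun i : Fin (n+1) =>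
      zQ ((Fin.cons x o : Fin (n+2) → A) i.castSucc) ((Fin.cons x o : Fin (n+2) → A) i.succ)),
    Fin.prod_univ_succ (f := fun i : Fin (n+2) => (gQ ((Fin.cons x o : Fin (n+2) → A) i))⁻¹)]
  simp only [Fin.castSucc_zero, Fin.cons_zero, Fin.cons_succ, ← Fin.succ_castSucc]
  ring

def snocEquiv (n : ℕ) : ((Fin (n+1) → A) × A) ≃ (Fin (n+2) → A) where
  toFun p := Fin.snoc p.1 p.2
  invFun o' := (fun i => o' i.castSucc, o' (Fin.last (n+1)))
  left_inv p := by
    refine Prod.ext (funext fun i => ?_) ?_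
    · show (Fin.snoc p.1 p.2 : Fin (n+2) → A) i.castSucc = p.1 i
      rw [Fin.snoc_castSucc]
    · show (Fin.snoc p.1 p.2 : Fin (n+2) → A) (Fin.last (n+1)) = p.2
      rw [Fin.snoc_last]
  right_inv o' := Fin.snoc_init_self o'

def consEquiv' (n : ℕ) : (A × (Fin (n+1) → A)) ≃ (Fin (n+2) → A) where
  toFun p := Fin.cons p.1 p.2
  invFun o' := (o' 0, fun i => o' i.succ)
  left_inv p := by
    refine Prod.ext ?_ (funext fun i => ?_)
    · show (Fin.cons p.1 p.2 : Fin (n+2) → A) 0 = p.1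
      rw [Fin.cons_zero]
    · show (Fin.cons p.1 p.2 : Fin (n+2) → A) i.succ = p.2 i
      rw [Fin.cons_succ]
  right_inv o' := Fin.cons_self_tail o'

lemma Fn_succ_snoc (n : ℕ) (a c : A) :
    Fn (n+1) a c = ∑ o : Fin (n+1) → A,
      if o 0 = a ∧ Function.Injective (Fin.snoc o c : Fin (n+2) → A)
      then Wt (n+1) (Fin.snoc o c) else 0 := by
  rw [Fn, ← (snocEquiv n (A := A)).sum_comp (fun o' : Fin (n+2) → A =>
    if o' 0 = a ∧ o' (Fin.last (n+1)) = c ∧ Function.Injective o' then Wt (n+1) o' else 0),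
    Fintype.sum_prod_type]
  refine Finset.sum_congr rfl fun o _ => ?_
  rw [Finset.sum_eq_single c]
  · have h0 : (Fin.snoc o c : Fin (n+2) → A) 0 = o 0 := by
      rw [show (0 : Fin (n+2)) = (0 : Fin (n+1)).castSucc from rfl, Fin.snoc_castSucc]
    have hl : (Fin.snoc o c : Fin (n+2) → A) (Fin.last (n+1)) = c := Fin.snoc_last ..
    simp only [show ∀ p, snocEquiv (A := A) n p = Fin.snoc p.1 p.2 from fun _ => rfl, h0, hl]
    by_cases h : o 0 = a ∧ Function.Injective (Fin.snoc o c : Fin (n+2) → A)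
    · rw [if_pos ⟨h.1, trivial, h.2⟩, if_pos h]
    · rw [if_neg, if_neg h]
      rintro ⟨h1, -, h3⟩
      exact h ⟨h1, h3⟩
  · intro x _ hx
    rw [if_neg]
    rintro ⟨-, h2, -⟩
    simp only [show ∀ p, snocEquiv (A := A) n p = Fin.snoc p.1 p.2 from fun _ => rfl, Fin.snoc_last] at h2
    exact hx h2
  · intro h; exact absurd (Finset.mem_univ _) h

lemma Fn_succ_cons (n : ℕ) (a c : A) :
    Fn (n+1) a c = ∑ o : Fin (n+1) → A,
      if o (Fin.last n) = c ∧ Function.Injective (Fin.cons a o : Fin (n+2) → A)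
      then Wt (n+1) (Fin.cons a o) else 0 := by
  rw [Fn, ← (consEquiv' n (A := A)).sum_comp (fun o' : Fin (n+2) → A =>
    if o' 0 = a ∧ o' (Fin.last (n+1)) = c ∧ Function.Injective o' then Wt (n+1) o' else 0),
    Fintype.sum_prod_type]
  rw [Finset.sum_eq_single a]
  · refine Finset.sum_congr rfl fun o _ => ?_
    have h0 : (Fin.cons a o : Fin (n+2) → A) 0 = a := Fin.cons_zero ..

    have hl : (Fin.cons a o : Fin (n+2) → A) (Fin.last (n+1)) = o (Fin.last n) := by
      rw [← Fin.succ_last, Fin.cons_succ]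
    simp only [show ∀ p, consEquiv' (A := A) n p = Fin.cons p.1 p.2 from fun _ => rfl, h0, hl]
    by_cases h : o (Fin.last n) = c ∧ Function.Injective (Fin.cons a o : Fin (n+2) → A)
    · rw [if_pos ⟨trivial, h.1, h.2⟩, if_pos h]
    · rw [if_neg, if_neg h]
      rintro ⟨-, h2, h3⟩
      exact h ⟨h2, h3⟩
  · intro x _ hx
    apply Finset.sum_eq_zero
    intro o _
    rw [if_neg]
    rintro ⟨h1, -, -⟩
    simp only [show ∀ p, consEquiv' (A := A) n p = Fin.cons p.1 p.2 from fun _ => rfl, Fin.cons_zero] at h1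
    exact hx h1
  · intro h; exact absurd (Finset.mem_univ _) h

end Steps

noncomputable section Steps2
variable {A : Type*} [Category A] [Fintype A] [∀ a b : A, Fintype (a ⟶ b)]

lemma step_right (skel : Skeletal A)
    (idem : ∀ (a : A) (f : a ⟶ a), f ≫ f = f → f = 𝟙 a)
    (n : ℕ) (a c : A) :
    ∑ b : A, Fn n a b * zQ b c = gQ c * (Fn n a c + Fn (n+1) a c) := by
  have E1 : ∑ b : A, Fn n a b * zQ b c
      = ∑ o : Fin (n+1) → A,
          if o 0 = a ∧ Function.Injective o then Wt n o * zQ (o (Fin.last n)) c else 0 := by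
    simp only [Fn, Finset.sum_mul]
    rw [Finset.sum_comm]
    refine Finset.sum_congr rfl fun o _ => ?_
    rw [Finset.sum_eq_single (o (Fin.last n))]
    · by_cases h : o 0 = a ∧ Function.Injective o
      · rw [if_pos ⟨h.1, rfl, h.2⟩, if_pos h]
      · rw [if_neg, if_neg h, zero_mul]
        rintro ⟨h1, -, h3⟩
        exact h ⟨h1, h3⟩
    · intro b _ hb
      rw [if_neg, zero_mul]
      rintro ⟨-, h2, -⟩
      exact hb h2.symm
    · intro h; exact absurd (Finset.mem_univ _) h
  have split : ∀ o : Fin (n+1) → A,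
      (if o 0 = a ∧ Function.Injective o then Wt n o * zQ (o (Fin.last n)) c else 0)
        = (if o 0 = a ∧ o (Fin.last n) = c ∧ Function.Injective o then Wt n o * gQ c else 0)
          + (if o 0 = a ∧ Function.Injective o ∧ o (Fin.last n) ≠ c
             then Wt n o * zQ (o (Fin.last n)) c else 0) := by
    intro o
    by_cases h1 : o 0 = a ∧ Function.Injective o
    · by_cases h2 : o (Fin.last n) = c
      · rw [if_pos h1, if_pos ⟨h1.1, h2, h1.2⟩, if_neg (fun h => h.2.2 h2), add_zero, h2]
        simp [zQ, gQ]
      · rw [if_pos h1, if_neg (fun h => h2 h.2.1), if_pos ⟨h1.1, h1.2, h2⟩, zero_add]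
    · rw [if_neg h1, if_neg (fun h => h1 ⟨h.1, h.2.2⟩), if_neg (fun h => h1 ⟨h.1, h.2.1⟩),
        add_zero]
  have T1 : ∑ o : Fin (n+1) → A,
      (if o 0 = a ∧ o (Fin.last n) = c ∧ Function.Injective o then Wt n o * gQ c else 0)
      = gQ c * Fn n a c := by
    rw [Fn, Finset.mul_sum]
    refine Finset.sum_congr rfl fun o _ => ?_
    split_ifs with h
    · ring
    · ring
  have T2 : ∑ o : Fin (n+1) → A,
      (if o 0 = a ∧ Function.Injective o ∧ o (Fin.last n) ≠ c
        then Wt n o * zQ (o (Fin.last n)) c else 0)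
      = gQ c * Fn (n+1) a c := by
    rw [Fn_succ_snoc, Finset.mul_sum]
    refine Finset.sum_congr rfl fun o _ => ?_
    by_cases hW : Wt n o * zQ (o (Fin.last n)) c = 0
    · rw [Wt_snoc]
      split_ifs <;> simp [hW]
    · have hWt : Wt n o ≠ 0 := left_ne_zero_of_mul hW
      have hzc : zQ (o (Fin.last n)) c ≠ 0 := right_ne_zero_of_mul hW
      have homs : ∀ i : Fin n, Nonempty (o i.castSucc ⟶ o i.succ) := by
        intro i
        apply zQ_nonempty
        have hp : (∏ i : Fin n, zQ (o i.castSucc) (o i.succ)) ≠ 0 := by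
          intro h0
          apply hWt
          rw [Wt, h0, zero_mul]
        exact Finset.prod_ne_zero_iff.mp hp i (Finset.mem_univ i)
      have hiff2 : Function.Injective (Fin.snoc o c : Fin (n+2) → A)
          ↔ (Function.Injective o ∧ o (Fin.last n) ≠ c) := by
        constructor
        · intro h
          obtain ⟨h1, h2⟩ := snoc_injective_iff.mp h
          exact ⟨h1, fun he => h2 ⟨Fin.last n, he⟩⟩
        · rintro ⟨h1, h2⟩
          exact snoc_extend_inj skel idem homs h1 (zQ_nonempty hzc) h2
      rw [Wt_snoc]
      by_cases h : o 0 = a ∧ Function.Injective o ∧ o (Fin.last n) ≠ c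
      · rw [if_pos h, if_pos ⟨h.1, hiff2.mpr h.2⟩, mul_comm (gQ c), mul_assoc,
          inv_mul_cancel₀ (gQ_ne c), mul_one]
      · rw [if_neg h, if_neg, mul_zero]
        rintro ⟨ha, hinj⟩
        obtain ⟨h1, h2⟩ := hiff2.mp hinj
        exact h ⟨ha, h1, h2⟩
  rw [E1, Finset.sum_congr rfl fun o _ => split o, Finset.sum_add_distrib, T1, T2]
  ring

lemma step_left (skel : Skeletal A)
    (idem : ∀ (a : A) (f : a ⟶ a), f ≫ f = f → f = 𝟙 a)
    (n : ℕ) (a c : A) :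
    ∑ b : A, zQ a b * Fn n b c = gQ a * (Fn n a c + Fn (n+1) a c) := by
  have E1 : ∑ b : A, zQ a b * Fn n b c
      = ∑ o : Fin (n+1) → A,
          if o (Fin.last n) = c ∧ Function.Injective o then zQ a (o 0) * Wt n o else 0 := by
    simp only [Fn, Finset.mul_sum]
    rw [Finset.sum_comm]
    refine Finset.sum_congr rfl fun o _ => ?_
    rw [Finset.sum_eq_single (o 0)]
    · by_cases h : o (Fin.last n) = c ∧ Function.Injective o
      · rw [if_pos ⟨rfl, h.1, h.2⟩, if_pos h]
      · rw [if_neg, mul_zero, if_neg h]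
        rintro ⟨-, h2, h3⟩
        exact h ⟨h2, h3⟩
    · intro b _ hb
      rw [if_neg, mul_zero]
      rintro ⟨h1, -, -⟩
      exact hb h1.symm
    · intro h; exact absurd (Finset.mem_univ _) h
  have split : ∀ o : Fin (n+1) → A,
      (if o (Fin.last n) = c ∧ Function.Injective o then zQ a (o 0) * Wt n o else 0)
        = (if o 0 = a ∧ o (Fin.last n) = c ∧ Function.Injective o then gQ a * Wt n o else 0)
          + (if o (Fin.last n) = c ∧ Function.Injective o ∧ a ≠ o 0
             then zQ a (o 0) * Wt n o else 0) := by
    intro o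
    by_cases h1 : o (Fin.last n) = c ∧ Function.Injective o
    · by_cases h2 : a = o 0
      · rw [if_pos h1, if_pos ⟨h2.symm, h1.1, h1.2⟩, if_neg (fun h => h.2.2 h2), add_zero,
          ← h2]
        simp [zQ, gQ]
      · rw [if_pos h1, if_neg (fun h => h2 h.1.symm), if_pos ⟨h1.1, h1.2, h2⟩, zero_add]
    · rw [if_neg h1, if_neg (fun h => h1 ⟨h.2.1, h.2.2⟩), if_neg (fun h => h1 ⟨h.1, h.2.1⟩),
        add_zero]
  have T1 : ∑ o : Fin (n+1) → A,
      (if o 0 = a ∧ o (Fin.last n) = c ∧ Function.Injective o then gQ a * Wt n o else 0)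
      = gQ a * Fn n a c := by
    rw [Fn, Finset.mul_sum]
    refine Finset.sum_congr rfl fun o _ => ?_
    split_ifs with h
    · ring
    · ring
  have T2 : ∑ o : Fin (n+1) → A,
      (if o (Fin.last n) = c ∧ Function.Injective o ∧ a ≠ o 0
        then zQ a (o 0) * Wt n o else 0)
      = gQ a * Fn (n+1) a c := by
    rw [Fn_succ_cons, Finset.mul_sum]
    refine Finset.sum_congr rfl fun o _ => ?_
    by_cases hW : zQ a (o 0) * Wt n o = 0
    · rw [Wt_cons]
      split_ifs <;> simp [hW]
    · have hza : zQ a (o 0) ≠ 0 := left_ne_zero_of_mul hW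
      have hWt : Wt n o ≠ 0 := right_ne_zero_of_mul hW
      have homs : ∀ i : Fin n, Nonempty (o i.castSucc ⟶ o i.succ) := by
        intro i
        apply zQ_nonempty
        have hp : (∏ i : Fin n, zQ (o i.castSucc) (o i.succ)) ≠ 0 := by
          intro h0
          apply hWt
          rw [Wt, h0, zero_mul]
        exact Finset.prod_ne_zero_iff.mp hp i (Finset.mem_univ i)
      have hiff2 : Function.Injective (Fin.cons a o : Fin (n+2) → A)
          ↔ (Function.Injective o ∧ a ≠ o 0) := by
        constructor
        · intro h
          obtain ⟨h1, h2⟩ := Fin.cons_injective_iff.mp h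
          exact ⟨h2, fun he => h1 ⟨0, he.symm⟩⟩
        · rintro ⟨h1, h2⟩
          exact cons_extend_inj skel idem homs h1 (zQ_nonempty hza) h2
      rw [Wt_cons]
      by_cases h : o (Fin.last n) = c ∧ Function.Injective o ∧ a ≠ o 0
      · rw [if_pos h, if_pos ⟨h.1, hiff2.mpr h.2⟩, mul_comm (gQ a), mul_assoc,
          inv_mul_cancel₀ (gQ_ne a), mul_one]
      · rw [if_neg h, if_neg, mul_zero]
        rintro ⟨hc', hinj⟩
        obtain ⟨h1, h2⟩ := hiff2.mp hinj
        exact h ⟨hc', h1, h2⟩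
  rw [E1, Finset.sum_congr rfl fun o _ => split o, Finset.sum_add_distrib, T1, T2]
  ring

end Steps2

lemma telescope_sum (G : ℕ → ℚ) (N : ℕ) :
    ∑ n ∈ Finset.range N, (-1:ℚ)^n * (G n + G (n+1)) = G 0 - (-1:ℚ)^N * G N := by
  induction N with
  | zero => simp
  | succ N ih => rw [Finset.sum_range_succ, ih, pow_succ]; ring


open scoped Classical in
/-- **Theorem 1.4** (Leinster). A finite skeletal category in which the only
idempotents are identities has Möbius inversion, given by the alternating sum
over paths with pairwise distinct objects of
`(-1)^n / (|Aut a₀| ⋯ |Aut aₙ|)`. -/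
theorem stmt_1 {A : Type u} [Category.{v} A] [Fintype A]
    [∀ a b : A, Fintype (a ⟶ b)]
    (skel : CategoryTheory.Skeletal A)
    (idem : ∀ (a : A) (f : a ⟶ a), f ≫ f = f → f = 𝟙 a)
    (μ : A → A → ℚ)
    (hμ : ∀ a b : A, μ a b =
      ∑' n : ℕ,
        ∑ p : (Σ o : Fin (n + 1) → A, ∀ i : Fin n, (o i.castSucc ⟶ o i.succ)),
          if p.1 0 = a ∧ p.1 (Fin.last n) = b ∧ Function.Injective p.1 then
            (-1 : ℚ) ^ n / ∏ i : Fin (n + 1), (Nat.card (Aut (p.1 i)) : ℚ)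
          else 0) :
    (∀ a c : A,
      ∑ b : A, μ a b * (Fintype.card (b ⟶ c) : ℚ) = if a = c then 1 else 0) ∧
    (∀ a c : A,
      ∑ b : A, (Fintype.card (a ⟶ b) : ℚ) * μ b c = if a = c then 1 else 0) := by
  set N := Fintype.card A with hN
  constructor
  · intro a c
    calc ∑ b : A, μ a b * (Fintype.card (b ⟶ c) : ℚ)
        = ∑ b : A, (∑ n ∈ Finset.range N, (-1:ℚ)^n * Fn n a b) * zQ b c := by
          refine Finset.sum_congr rfl fun b _ => ?_
          rw [mu_eq idem μ hμ a b]
          rfl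
      _ = ∑ n ∈ Finset.range N, (-1:ℚ)^n * ∑ b : A, Fn n a b * zQ b c := by
          simp only [Finset.sum_mul]
          rw [Finset.sum_comm]
          refine Finset.sum_congr rfl fun n _ => ?_
          rw [Finset.mul_sum]
          exact Finset.sum_congr rfl fun b _ => by ring
      _ = ∑ n ∈ Finset.range N, (-1:ℚ)^n * (gQ c * (Fn n a c + Fn (n+1) a c)) :=
          Finset.sum_congr rfl fun n _ => by rw [step_right skel idem]
      _ = gQ c * ∑ n ∈ Finset.range N, (-1:ℚ)^n * (Fn n a c + Fn (n+1) a c) := by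
          rw [Finset.mul_sum]
          exact Finset.sum_congr rfl fun n _ => by ring
      _ = gQ c * (Fn 0 a c - (-1:ℚ)^N * Fn N a c) := by rw [telescope_sum]
      _ = gQ c * Fn 0 a c := by rw [Fn_zero_of_le le_rfl, mul_zero, sub_zero]
      _ = if a = c then 1 else 0 := by
          rw [Fn_zero']
          by_cases h : a = c
          · subst h
            rw [if_pos rfl, if_pos rfl, mul_inv_cancel₀ (gQ_ne a)]
          · rw [if_neg h, if_neg h, mul_zero]
  · intro a c
    calc ∑ b : A, (Fintype.card (a ⟶ b) : ℚ) * μ b c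
        = ∑ b : A, zQ a b * (∑ n ∈ Finset.range N, (-1:ℚ)^n * Fn n b c) := by
          refine Finset.sum_congr rfl fun b _ => ?_
          rw [mu_eq idem μ hμ b c]
          rfl
      _ = ∑ n ∈ Finset.range N, (-1:ℚ)^n * ∑ b : A, zQ a b * Fn n b c := by
          simp only [Finset.mul_sum]
          rw [Finset.sum_comm]
          refine Finset.sum_congr rfl fun n _ => ?_
          exact Finset.sum_congr rfl fun b _ => by ring
      _ = ∑ n ∈ Finset.range N, (-1:ℚ)^n * (gQ a * (Fn n a c + Fn (n+1) a c)) :=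
          Finset.sum_congr rfl fun n _ => by rw [step_left skel idem]
      _ = gQ a * ∑ n ∈ Finset.range N, (-1:ℚ)^n * (Fn n a c + Fn (n+1) a c) := by
          rw [Finset.mul_sum]
          exact Finset.sum_congr rfl fun n _ => by ring
      _ = gQ a * (Fn 0 a c - (-1:ℚ)^N * Fn N a c) := by rw [telescope_sum]
      _ = gQ a * Fn 0 a c := by rw [Fn_zero_of_le le_rfl, mul_zero, sub_zero]
      _ = if a = c then 1 else 0 := by
          rw [Fn_zero']
          by_cases h : a = c
          · subst h
            rw [if_pos rfl, if_pos rfl, mul_inv_cancel₀ (gQ_ne a)]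
          · rw [if_neg h, if_neg h, mul_zero]
end

section
/- Let A be a finite category with Möbius inversion with Möbius function μ, and let X : A → Set be a functor with each set Xa finite. Suppose there are natural numbers r(a), one for each object a of A, such that X is isomorphic to the coproduct over objects a of r(a) copies of the representable functor A(a,−). Then for every object a of A, r(a) = ∑_b |Xb| · μ(b,a), where the sum is over objects b of A and |Xb| is the cardinality of the set Xb. -/
/-! Counting the elements of `∐_a r(a)·A(a,-)` at `b` shows that the row vector `b ↦ |Xb|` is
`r ζ`; multiplying on the right by `μ`, a right inverse of `ζ`, recovers `r`. -/

open CategoryTheory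

/-- The coproduct, over objects `a` of `A`, of `r a` copies of the
representable functor `A(a, -)`. -/
def famRep {A : Type u} [Category.{v} A] (r : A → ℕ) : A ⥤ Type (max u v) where
  obj b := Σ a : A, Fin (r a) × (a ⟶ b)
  map f := TypeCat.ofHom fun p => ⟨p.1, p.2.1, p.2.2 ≫ f⟩

open Matrix

universe u v

def zetaMatrix (A : Type u) [Category.{v} A] [∀ a b : A, Fintype (a ⟶ b)] : Matrix A A ℚ :=
  of fun a b => (Fintype.card (a ⟶ b) : ℚ)

section

variable {A : Type u} [Category.{v} A] [Fintype A] [∀ a b : A, Fintype (a ⟶ b)]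
  {X : A ⥤ Type (max u v)} [∀ a : A, Fintype (X.obj a)] {r : A → ℕ}

theorem card_obj_eq_sum_of_iso_famRep (iso : X ≅ famRep r) (b : A) :
    Fintype.card (X.obj b) = ∑ a : A, r a * Fintype.card (a ⟶ b) := by
  let e : X.obj b ≃ Σ a : A, Fin (r a) × (a ⟶ b) := (iso.app b).toEquiv
  simp only [Fintype.card_congr e, Fintype.card_sigma, Fintype.card_prod, Fintype.card_fin]

theorem card_obj_eq_vecMul_zetaMatrix (iso : X ≅ famRep r) :
    (fun b => (Fintype.card (X.obj b) : ℚ)) = (fun a => (r a : ℚ)) ᵥ* zetaMatrix A := by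
  funext b
  simp [vecMul, dotProduct, zetaMatrix, card_obj_eq_sum_of_iso_famRep iso b]

end

open scoped Classical in
/-- **Proposition 1.7** (Leinster). If a finite category `A` has Möbius
inversion `μ` and `X : A ⥤ Set` is a finite functor isomorphic to
`∑_a r(a)·A(a,-)`, then `r(a) = ∑_b |Xb| μ(b,a)`. -/
theorem stmt_4 {A : Type u} [Category.{v} A] [Fintype A]
    [∀ a b : A, Fintype (a ⟶ b)]
    (μ : A → A → ℚ)
    (hμ₁ : ∀ a c : A,
      ∑ b : A, μ a b * (Fintype.card (b ⟶ c) : ℚ) = if a = c then 1 else 0)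
    (hμ₂ : ∀ a c : A,
      ∑ b : A, (Fintype.card (a ⟶ b) : ℚ) * μ b c = if a = c then 1 else 0)
    (X : A ⥤ Type (max u v)) [∀ a : A, Fintype (X.obj a)]
    (r : A → ℕ) (iso : X ≅ famRep r) :
    ∀ a : A, (r a : ℚ) = ∑ b : A, (Fintype.card (X.obj b) : ℚ) * μ b a := by
  intro a
  have hζμ : zetaMatrix A * of μ = 1 := by
    ext a c
    simp [mul_apply, one_apply, zetaMatrix, hμ₂]
  calc (r a : ℚ) = ((fun c => (r c : ℚ)) ᵥ* zetaMatrix A ᵥ* of μ) a := by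
        rw [vecMul_vecMul, hζμ, vecMul_one]
    _ = ∑ b : A, (Fintype.card (X.obj b) : ℚ) * μ b a := by
        rw [← card_obj_eq_vecMul_zetaMatrix iso]
        rfl
end

section
/- Let A and B be equivalent finite categories. Then A admits a weighting if and only if B admits a weighting. -/
/-!
A weighting `k` on `A` can be pushed forward along any functor `F : A ⥤ B` with a left adjoint
`G`: put `l b = ∑_{F a ≅ b} k a / n b`, where `n b` is the number of objects isomorphic to `b`,
so that the mass `k a` is spread evenly over the isomorphism class of `F a`. Since `ζ(b, -)` is
constant on isomorphism classes, `∑_{b'} ζ(b, b') l b' = ∑_a ζ(b, F a) k a = ∑_a ζ(G b, a) k a = 1`.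
An equivalence is an adjunction in both directions.
-/

open CategoryTheory Finset

namespace CategoryTheory

open Classical

def IsWeighting {C : Type*} [Category C] [Fintype C] [∀ x y : C, Fintype (x ⟶ y)]
    (k : C → ℚ) : Prop :=
  ∀ a : C, ∑ b : C, (Fintype.card (a ⟶ b) : ℚ) * k b = 1

lemma card_hom_congr {C : Type*} [Category C] [∀ x y : C, Fintype (x ⟶ y)] {x y z w : C}
    (i : x ≅ y) (j : z ≅ w) : Fintype.card (x ⟶ z) = Fintype.card (y ⟶ w) :=
  Fintype.card_congr (i.homCongr j)

section

variable {C : Type*} [Category C] [Fintype C]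

noncomputable def isoClassCard (x : C) : ℕ :=
  #{y | Nonempty (x ≅ y)}

lemma isoClassCard_pos (x : C) : 0 < isoClassCard x :=
  card_pos.mpr ⟨x, mem_filter.mpr ⟨mem_univ x, ⟨Iso.refl x⟩⟩⟩

lemma isoClassCard_congr {x y : C} (i : x ≅ y) : isoClassCard x = isoClassCard y := by
  unfold isoClassCard
  congr 1
  exact filter_congr fun z _ => ⟨fun ⟨j⟩ => ⟨i.symm ≪≫ j⟩, fun ⟨j⟩ => ⟨i ≪≫ j⟩⟩

lemma sum_isoClass_div_isoClassCard (x : C) (g : C → ℚ)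
    (hg : ∀ {y z : C}, (y ≅ z) → g y = g z) :
    ∑ y : C, (if Nonempty (x ≅ y) then g y / isoClassCard y else 0) = g x := by
  have hterm : ∀ y : C, (if Nonempty (x ≅ y) then g y / isoClassCard y else 0) =
      if Nonempty (x ≅ y) then g x / isoClassCard x else 0 := fun y => by
    split_ifs with h
    · obtain ⟨i⟩ := h
      rw [hg i, isoClassCard_congr i]
    · rfl
  have hpos : (isoClassCard x : ℚ) ≠ 0 := by exact_mod_cast (isoClassCard_pos x).ne'
  rw [sum_congr rfl fun y _ => hterm y, sum_ite, sum_const_zero, add_zero, sum_const,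
    nsmul_eq_mul]
  change (isoClassCard x : ℚ) * (g x / isoClassCard x) = g x
  field_simp

end

variable {A : Type*} [Category A] [Fintype A] [∀ x y : A, Fintype (x ⟶ y)]
  {B : Type*} [Category B] [Fintype B] [∀ x y : B, Fintype (x ⟶ y)]

noncomputable def pushforwardWeighting (F : A ⥤ B) (k : A → ℚ) (b : B) : ℚ :=
  ∑ a : A, if Nonempty (F.obj a ≅ b) then k a / isoClassCard b else 0

lemma IsWeighting.pushforward {G : B ⥤ A} {F : A ⥤ B} (adj : G ⊣ F) {k : A → ℚ}
    (hk : IsWeighting k) : IsWeighting (pushforwardWeighting F k) := by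
  intro b
  have hζ : ∀ {y z : B}, (y ≅ z) → (Fintype.card (b ⟶ y) : ℚ) = Fintype.card (b ⟶ z) :=
    fun i => by exact_mod_cast card_hom_congr (Iso.refl b) i
  calc ∑ b' : B, (Fintype.card (b ⟶ b') : ℚ) * pushforwardWeighting F k b'
      = ∑ a : A, (∑ b' : B, if Nonempty (F.obj a ≅ b') then
          (Fintype.card (b ⟶ b') : ℚ) / isoClassCard b' else 0) * k a := by
        simp only [pushforwardWeighting, mul_sum, sum_mul]
        rw [sum_comm]
        refine sum_congr rfl fun a _ => sum_congr rfl fun b' _ => ?_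
        split_ifs <;> ring
    _ = ∑ a : A, (Fintype.card (b ⟶ F.obj a) : ℚ) * k a := by
        simp only [sum_isoClass_div_isoClassCard _ _ hζ]
    _ = ∑ a : A, (Fintype.card (G.obj b ⟶ a) : ℚ) * k a := by
        simp only [Fintype.card_congr (adj.homEquiv b _)]
    _ = 1 := hk (G.obj b)

end CategoryTheory

/-- **Lemma 1.10** (Leinster). If `A` and `B` are equivalent finite
categories, then `A` admits a weighting if and only if `B` does. -/
theorem stmt_5 {A : Type u₁} [Category.{v₁} A] [Fintype A]
    [∀ a b : A, Fintype (a ⟶ b)]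
    {B : Type u₂} [Category.{v₂} B] [Fintype B]
    [∀ a b : B, Fintype (a ⟶ b)]
    (e : A ≌ B) :
    (∃ k : A → ℚ, ∀ a : A, ∑ b : A, (Fintype.card (a ⟶ b) : ℚ) * k b = 1) ↔
    (∃ l : B → ℚ, ∀ a : B, ∑ b : B, (Fintype.card (a ⟶ b) : ℚ) * l b = 1) :=
  ⟨fun ⟨_, hk⟩ => ⟨_, IsWeighting.pushforward e.symm.toAdjunction hk⟩,
    fun ⟨_, hl⟩ => ⟨_, IsWeighting.pushforward e.toAdjunction hl⟩⟩
end

section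
/- Let A be a finite category and X : A → Cat a functor such that the category of elements ∫X is finite. Suppose given a weighting k^• on A and a weighting k^• on each category Xa. Then the function sending an object (a, x) of ∫X (with a an object of A and x an object of Xa) to k^a · k^x is a weighting on ∫X. -/
open CategoryTheory

/-- **Lemma 1.12** (Leinster). Given a finite functor `X : A ⥤ Cat`, a
weighting on `A` and weightings on each fibre `X.obj a`, the pointwise
products form a weighting on the category of elements (Grothendieck
construction) of `X`. -/
theorem stmt_7 {A : Type u} [Category.{v} A] [Fintype A]
    [∀ a b : A, Fintype (a ⟶ b)]
    (X : A ⥤ Cat.{v₂, u₂})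
    [Fintype (Grothendieck X)]
    [∀ p q : Grothendieck X, Fintype (p ⟶ q)]
    [∀ a : A, Fintype (X.obj a)]
    [∀ (a : A) (x y : X.obj a), Fintype (x ⟶ y)]
    (k : A → ℚ) (kf : ∀ a : A, X.obj a → ℚ)
    (hk : ∀ a : A, ∑ b : A, (Fintype.card (a ⟶ b) : ℚ) * k b = 1)
    (hkf : ∀ (a : A) (x : X.obj a),
      ∑ y : X.obj a, (Fintype.card (x ⟶ y) : ℚ) * kf a y = 1) :
    ∀ p : Grothendieck X,
      ∑ q : Grothendieck X,
        (Fintype.card (p ⟶ q) : ℚ) * (k q.base * kf q.base q.fiber) = 1 := by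
  intro p
  have hcard : ∀ q : Grothendieck X, (Fintype.card (p ⟶ q) : ℚ) =
      ∑ f : p.base ⟶ q.base,
        (Fintype.card ((X.map f).toFunctor.obj p.fiber ⟶ q.fiber) : ℚ) := by
    intro q
    rw [Fintype.card_congr
      (Equiv.mk
        (fun h : p ⟶ q =>
          (⟨h.base, h.fiber⟩ : Σ f : p.base ⟶ q.base, ((X.map f).toFunctor.obj p.fiber ⟶ q.fiber)))
        (fun s => ⟨s.1, s.2⟩) (fun _ => rfl) (fun _ => rfl)),
      Fintype.card_sigma]
    push_cast
    rfl
  rw [Fintype.sum_equiv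
      (Equiv.mk (fun q : Grothendieck X => (⟨q.base, q.fiber⟩ : Σ b : A, X.obj b))
        (fun s => ⟨s.1, s.2⟩) (fun _ => rfl) (fun _ => rfl))
      (fun q : Grothendieck X =>
          (Fintype.card (p ⟶ q) : ℚ) * (k q.base * kf q.base q.fiber))
      (fun s : Σ b : A, X.obj b =>
          (Fintype.card (p ⟶ ⟨s.1, s.2⟩) : ℚ) * (k s.1 * kf s.1 s.2))
      (fun q => rfl)]
  rw [← Finset.univ_sigma_univ, Finset.sum_sigma]
  calc ∑ b : A, ∑ y : X.obj b,
        (Fintype.card (p ⟶ (⟨b, y⟩ : Grothendieck X)) : ℚ) * (k b * kf b y)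
      = ∑ b : A, ∑ f : p.base ⟶ b,
          k b * ∑ y : X.obj b,
            (Fintype.card ((X.map f).toFunctor.obj p.fiber ⟶ y) : ℚ) * kf b y := by
        refine Finset.sum_congr rfl fun b _ => ?_
        simp_rw [hcard, Finset.sum_mul, Finset.mul_sum]
        rw [Finset.sum_comm]
        exact Finset.sum_congr rfl fun f _ => Finset.sum_congr rfl fun y _ => by ring
    _ = ∑ b : A, ∑ _f : p.base ⟶ b, k b := by
        refine Finset.sum_congr rfl fun b _ => Finset.sum_congr rfl fun f _ => ?_
        rw [hkf b ((X.map f).toFunctor.obj p.fiber), mul_one]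
    _ = ∑ b : A, (Fintype.card (p.base ⟶ b) : ℚ) * k b := by
        simp [Finset.sum_const, mul_comm]
    _ = 1 := hk p.base
end

section
/- Let A and B be finite categories and suppose there is an adjunction F ⊣ G with F : A → B and G : B → A. If A has Euler characteristic and B has Euler characteristic, then χ(A) = χ(B). (Concretely: if k_• is a coweighting on A and l^• is a weighting on B, then ∑_a k_a = ∑_b l^b.) -/
/-!
The hom-counts `|B(F a, b)| = |A(a, G b)|` form one `A × B` matrix `M`. A weighting `l` on `B`
has `M l = 1` and a coweighting `k` on `A` has `k M = 1`, so `∑ k = k (M l) = (k M) l = ∑ l`.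
-/

open CategoryTheory Matrix

theorem Matrix.sum_eq_sum_of_vecMul_eq_one_of_mulVec_eq_one {ι κ R : Type*} [Fintype ι]
    [Fintype κ] [Semiring R] (M : Matrix ι κ R) (k : ι → R) (l : κ → R)
    (hk : k ᵥ* M = 1) (hl : M *ᵥ l = 1) : ∑ i, k i = ∑ j, l j :=
  calc ∑ i, k i = k ⬝ᵥ (M *ᵥ l) := by rw [hl, dotProduct_one]
    _ = (k ᵥ* M) ⬝ᵥ l := dotProduct_mulVec k M l
    _ = ∑ j, l j := by rw [hk, one_dotProduct]

/-- **Proposition 2.4(a)** (Leinster). If there is an adjunction `F ⊣ G`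
between finite categories `A` and `B`, both having Euler characteristic, then
`χ(A) = χ(B)`: concretely, for a coweighting `k_•` on `A` and a weighting
`l^•` on `B`, `∑_a k_a = ∑_b l^b`. -/
theorem stmt_9 {A : Type u₁} [Category.{v₁} A] [Fintype A]
    [∀ a b : A, Fintype (a ⟶ b)]
    {B : Type u₂} [Category.{v₂} B] [Fintype B]
    [∀ a b : B, Fintype (a ⟶ b)]
    (F : A ⥤ B) (G : B ⥤ A) (adj : F ⊣ G)
    -- `A` has Euler characteristic: a weighting and a coweighting on `A`
    (kA : A → ℚ) (hkA : ∀ a : A, ∑ b : A, (Fintype.card (a ⟶ b) : ℚ) * kA b = 1)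
    (kA' : A → ℚ) (hkA' : ∀ b : A, ∑ a : A, kA' a * (Fintype.card (a ⟶ b) : ℚ) = 1)
    -- `B` has Euler characteristic: a weighting and a coweighting on `B`
    (lB : B → ℚ) (hlB : ∀ a : B, ∑ b : B, (Fintype.card (a ⟶ b) : ℚ) * lB b = 1)
    (lB' : B → ℚ) (hlB' : ∀ b : B, ∑ a : B, lB' a * (Fintype.card (a ⟶ b) : ℚ) = 1) :
    ∑ a : A, kA' a = ∑ b : B, lB b := by
  have hcard (a : A) (b : B) :
      (Fintype.card (F.obj a ⟶ b) : ℚ) = Fintype.card (a ⟶ G.obj b) := by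
    exact_mod_cast Fintype.card_congr (adj.homEquiv a b)
  refine sum_eq_sum_of_vecMul_eq_one_of_mulVec_eq_one
    (of fun a b ↦ (Fintype.card (F.obj a ⟶ b) : ℚ)) kA' lB ?_ ?_
  · ext b
    simpa [vecMul, dotProduct, hcard] using hkA' (G.obj b)
  · ext a
    simpa [mulVec, dotProduct] using hlB (F.obj a)
end

section
/- Let A be a finite category and X : A → Cat a functor such that the category of elements ∫X is finite. Let k^• be a weighting on A, and suppose that ∫X and each category Xa have Euler characteristic. Then χ(∫X) = ∑_a k^a · χ(Xa), the sum being over all objects a of A. -/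
open CategoryTheory

/-- Objects of the Grothendieck construction as a sigma type. -/
def grothObjEquiv {A : Type u} [Category.{v} A] (X : A ⥤ Cat.{v₂, u₂}) :
    (Σ a : A, X.obj a) ≃ Grothendieck X where
  toFun s := ⟨s.1, s.2⟩
  invFun p := ⟨p.base, p.fiber⟩
  left_inv s := rfl
  right_inv p := rfl

/-- Morphisms of the Grothendieck construction as a sigma type. -/
def grothHomEquiv {A : Type u} [Category.{v} A] (X : A ⥤ Cat.{v₂, u₂})
    (p q : Grothendieck X) :
    (p ⟶ q) ≃ Σ f : p.base ⟶ q.base, ((X.map f).toFunctor.obj p.fiber ⟶ q.fiber) where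
  toFun h := ⟨h.base, h.fiber⟩
  invFun s := ⟨s.1, s.2⟩
  left_inv h := rfl
  right_inv s := rfl

/-- **Proposition 2.8** (Leinster). Let `A` be a finite category, `X : A ⥤ Cat`
a finite functor and `k` a weighting on `A`. If the category of elements `∫X`
and each fibre `X.obj a` have Euler characteristic, then
`χ(∫X) = ∑_a k^a · χ(X.obj a)`. -/
theorem stmt_10 {A : Type u} [Category.{v} A] [Fintype A]
    [∀ a b : A, Fintype (a ⟶ b)]
    (X : A ⥤ Cat.{v₂, u₂})
    [Fintype (Grothendieck X)]
    [∀ p q : Grothendieck X, Fintype (p ⟶ q)]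
    [∀ a : A, Fintype (X.obj a)]
    [∀ (a : A) (x y : X.obj a), Fintype (x ⟶ y)]
    -- a weighting on `A`
    (k : A → ℚ) (hk : ∀ a : A, ∑ b : A, (Fintype.card (a ⟶ b) : ℚ) * k b = 1)
    -- `∫X` has Euler characteristic: a weighting and a coweighting on it
    (K : Grothendieck X → ℚ)
    (hK : ∀ p : Grothendieck X,
      ∑ q : Grothendieck X, (Fintype.card (p ⟶ q) : ℚ) * K q = 1)
    (K' : Grothendieck X → ℚ)
    (hK' : ∀ q : Grothendieck X,
      ∑ p : Grothendieck X, K' p * (Fintype.card (p ⟶ q) : ℚ) = 1)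
    -- each `X.obj a` has Euler characteristic: a weighting and a coweighting
    (w : ∀ a : A, X.obj a → ℚ)
    (hw : ∀ (a : A) (x : X.obj a),
      ∑ y : X.obj a, (Fintype.card (x ⟶ y) : ℚ) * w a y = 1)
    (w' : ∀ a : A, X.obj a → ℚ)
    (hw' : ∀ (a : A) (y : X.obj a),
      ∑ x : X.obj a, w' a x * (Fintype.card (x ⟶ y) : ℚ) = 1) :
    ∑ p : Grothendieck X, K p = ∑ a : A, k a * ∑ x : X.obj a, w a x := by
  classical
  -- `L` is the induced weighting on `∫X`.
  set L : Grothendieck X → ℚ := fun p => k p.base * w p.base p.fiber with hLdef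
  -- card of hom sets in `∫X`
  have hcard : ∀ p q : Grothendieck X,
      (Fintype.card (p ⟶ q) : ℚ) =
        ∑ f : p.base ⟶ q.base,
          (Fintype.card ((X.map f).toFunctor.obj p.fiber ⟶ q.fiber) : ℚ) := by
    intro p q
    rw [Fintype.card_congr (grothHomEquiv X p q), Fintype.card_sigma]
    push_cast
    rfl
  -- `L` is a weighting
  have hL : ∀ p : Grothendieck X,
      ∑ q : Grothendieck X, (Fintype.card (p ⟶ q) : ℚ) * L q = 1 := by
    intro p
    rw [← Fintype.sum_equiv (grothObjEquiv X)
      (fun s => (Fintype.card (p ⟶ grothObjEquiv X s) : ℚ) * L (grothObjEquiv X s))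
      (fun q => (Fintype.card (p ⟶ q) : ℚ) * L q) (fun s => rfl)]
    rw [← Finset.univ_sigma_univ, Finset.sum_sigma]
    have : ∀ b : A, ∀ y : X.obj b,
        (Fintype.card (p ⟶ grothObjEquiv X ⟨b, y⟩) : ℚ) * L (grothObjEquiv X ⟨b, y⟩)
          = (∑ f : p.base ⟶ b,
              (Fintype.card ((X.map f).toFunctor.obj p.fiber ⟶ y) : ℚ)) * (k b * w b y) := by
      intro b y
      rw [hcard]
      rfl
    calc ∑ b : A, ∑ y : X.obj b,
          (Fintype.card (p ⟶ grothObjEquiv X ⟨b, y⟩) : ℚ) * L (grothObjEquiv X ⟨b, y⟩)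
        = ∑ b : A, ∑ y : X.obj b, ∑ f : p.base ⟶ b,
            (Fintype.card ((X.map f).toFunctor.obj p.fiber ⟶ y) : ℚ) * (k b * w b y) := by
          simp_rw [this, Finset.sum_mul]
      _ = ∑ b : A, ∑ f : p.base ⟶ b, k b * ∑ y : X.obj b,
            (Fintype.card ((X.map f).toFunctor.obj p.fiber ⟶ y) : ℚ) * w b y := by
          refine Finset.sum_congr rfl fun b _ => ?_
          rw [Finset.sum_comm]
          refine Finset.sum_congr rfl fun f _ => ?_
          rw [Finset.mul_sum]
          refine Finset.sum_congr rfl fun y _ => ?_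
          ring
      _ = ∑ b : A, ∑ f : p.base ⟶ b, k b := by
          simp [hw]
      _ = ∑ b : A, (Fintype.card (p.base ⟶ b) : ℚ) * k b := by
          simp [Finset.sum_const, mul_comm]
      _ = 1 := hk p.base
  -- any weighting on `∫X` has the same total as the coweighting `K'`
  have key : ∀ M : Grothendieck X → ℚ,
      (∀ p, ∑ q : Grothendieck X, (Fintype.card (p ⟶ q) : ℚ) * M q = 1) →
      ∑ q : Grothendieck X, M q = ∑ p : Grothendieck X, K' p := by
    intro M hM
    calc ∑ q : Grothendieck X, M q
        = ∑ q : Grothendieck X,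
            (∑ p : Grothendieck X, K' p * (Fintype.card (p ⟶ q) : ℚ)) * M q := by
          simp [hK']
      _ = ∑ p : Grothendieck X, K' p *
            ∑ q : Grothendieck X, (Fintype.card (p ⟶ q) : ℚ) * M q := by
          simp_rw [Finset.sum_mul]
          rw [Finset.sum_comm]
          simp_rw [Finset.mul_sum, mul_assoc]
      _ = ∑ p : Grothendieck X, K' p := by simp [hM]
  have h1 := key K hK
  have h2 := key L hL
  rw [h1, ← h2]
  rw [← Fintype.sum_equiv (grothObjEquiv X) (fun s => L (grothObjEquiv X s)) L fun s => rfl]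
  rw [← Finset.univ_sigma_univ, Finset.sum_sigma]
  exact Finset.sum_congr rfl fun a _ => by rw [Finset.mul_sum]; rfl
end

section
/- Let G be a finite directed graph (quiver) with vertex set G_0 and edge set G_1 that is circuit-free, i.e. contains no directed path of nonzero length from any vertex to itself. Then the free category F(G) on G (whose objects are the vertices of G and whose morphisms are directed paths in G) is a finite category, it has Möbius inversion with μ = δ − ζ_G (where ζ_G(a,b) is the number of edges from a to b), and its Euler characteristic is defined and equals |G_0| − |G_1|. -/
/-!
Splitting a path at its last edge gives `ζ = δ + ζ ζ_G` for the path-count matrix `ζ` and the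
edge-count matrix `ζ_G`, i.e. `ζ (1 - ζ_G) = 1`, so `μ = 1 - ζ_G` is a two-sided inverse of `ζ`.
Any Möbius inversion yields a weighting (the row sums of `μ`) and a coweighting (its column sums),
both with total `∑ μ = |G₀| - |G₁|`. Circuit-freeness is what makes the hom-sets finite.
-/

open CategoryTheory Matrix

universe u v

namespace Matrix

variable {ι R : Type*} [Fintype ι]

theorem sum_mulVec_one [NonAssocSemiring R] (M : Matrix ι ι R) :
    ∑ i, (M *ᵥ 1) i = ∑ i, ∑ j, M i j := by
  simp [mulVec, dotProduct]

theorem sum_one_vecMul [NonAssocSemiring R] (M : Matrix ι ι R) :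
    ∑ j, (1 ᵥ* M) j = ∑ i, ∑ j, M i j := by
  simp [vecMul, dotProduct, Finset.sum_comm (γ := ι)]

variable [DecidableEq ι]

theorem mulVec_mulVec_one_of_mul_eq_one [Semiring R] {Z M : Matrix ι ι R} (h : Z * M = 1) :
    Z *ᵥ (M *ᵥ 1) = 1 := by
  rw [mulVec_mulVec, h, one_mulVec]

theorem vecMul_vecMul_one_of_mul_eq_one [Semiring R] {Z M : Matrix ι ι R} (h : M * Z = 1) :
    (1 ᵥ* M) ᵥ* Z = 1 := by
  rw [vecMul_vecMul, h, vecMul_one]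

end Matrix

namespace Quiver.Path

variable {V : Type u} [Quiver.{v + 1} V]

def equivNilOrCons (a c : V) :
    Path a c ≃ PLift (a = c) ⊕ Σ b : V, Path a b × (b ⟶ c) where
  toFun
    | nil => .inl ⟨rfl⟩
    | cons p e => .inr ⟨_, p, e⟩
  invFun
    | .inl ⟨h⟩ => h ▸ nil
    | .inr ⟨_, p, e⟩ => p.cons e
  left_inv p := by cases p <;> rfl
  right_inv
    | .inl ⟨rfl⟩ => rfl
    | .inr _ => rfl

/-- Without circuits, "there is a path of positive length from `b` to `c`" is a strict order on
the finite vertex set, hence well-founded; induct on `c` along it. -/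
theorem finite_of_circuitFree [Finite V] [∀ a b : V, Finite (a ⟶ b)]
    (circuitFree : ∀ (a : V) (p : Path a a), p.length = 0) (a c : V) :
    Finite (Path a c) := by
  let r : V → V → Prop := fun b c => ∃ p : Path b c, 0 < p.length
  have : IsTrans V r := ⟨fun _ _ _ ⟨p, hp⟩ ⟨q, _⟩ => ⟨p.comp q, by rw [length_comp]; omega⟩⟩
  have : Std.Irrefl r := ⟨fun b ⟨p, hp⟩ => hp.ne' (circuitFree b p)⟩
  induction c using (Finite.wellFounded_of_trans_of_irrefl r).induction with
  | _ c ih =>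
    have (b : V) : Finite (Path a b × (b ⟶ c)) := by
      cases isEmpty_or_nonempty (b ⟶ c) with
      | inl _ => infer_instance
      | inr h =>
        have := ih b ⟨h.some.toPath, by simp⟩
        infer_instance
    exact .of_equiv _ (equivNilOrCons a c).symm

theorem natCard_eq_ite_add_sum [Fintype V] [DecidableEq V] [∀ a b : V, Finite (a ⟶ b)]
    [∀ a b : V, Finite (Path a b)] (a c : V) :
    Nat.card (Path a c) =
      (if a = c then 1 else 0) + ∑ b, Nat.card (Path a b) * Nat.card (b ⟶ c) := by
  rw [Nat.card_congr (equivNilOrCons a c), Nat.card_sum, Nat.card_sigma]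
  simp only [Nat.card_prod]
  split_ifs with h
  · subst h; simp
  · simp [h]

end Quiver.Path

namespace Quiver

variable (R : Type*) (V : Type u) [Quiver.{v + 1} V]

noncomputable def pathCountMatrix [NatCast R] : Matrix V V R := of fun a b => Nat.card (Path a b)

noncomputable def edgeCountMatrix [NatCast R] : Matrix V V R := of fun a b => Nat.card (a ⟶ b)

variable {R V} [Fintype V] [DecidableEq V] [∀ a b : V, Finite (a ⟶ b)]
  [∀ a b : V, Finite (Path a b)]

theorem pathCountMatrix_eq_one_add_mul [Semiring R] :
    pathCountMatrix R V = 1 + pathCountMatrix R V * edgeCountMatrix R V := by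
  ext a c
  simp [pathCountMatrix, edgeCountMatrix, mul_apply, one_apply, Path.natCard_eq_ite_add_sum a c]

theorem pathCountMatrix_mul_one_sub [Ring R] :
    pathCountMatrix R V * (1 - edgeCountMatrix R V) = 1 := by
  rw [Matrix.mul_sub, Matrix.mul_one, sub_eq_iff_eq_add', add_comm,
    ← pathCountMatrix_eq_one_add_mul]

theorem one_sub_mul_pathCountMatrix [CommRing R] :
    (1 - edgeCountMatrix R V) * pathCountMatrix R V = 1 :=
  mul_eq_one_comm.mp pathCountMatrix_mul_one_sub

end Quiver

open scoped Classical in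
/-- **Proposition 2.10** (Leinster). For a finite circuit-free directed graph
`G` (a quiver `V`), the free category `F(G)` (Mathlib's `Paths V`, whose
hom-sets are `Quiver.Path a b`) is a finite category, it has Möbius inversion
`μ = δ - ζ_G`, and its Euler characteristic is defined and equals
`|G₀| - |G₁|`. -/
theorem stmt_11 {V : Type u} [Quiver.{v + 1} V] [Fintype V]
    [∀ a b : V, Fintype (a ⟶ b)]
    (circuitFree : ∀ (a : V) (p : Quiver.Path a a), p.length = 0) :
    -- the free category on `V` is finite
    (∀ a b : Paths V, Finite (a ⟶ b)) ∧
    -- it has Möbius inversion `μ = δ - ζ_G`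
    ((∀ a c : V,
        ∑ b : V, ((if a = b then 1 else 0) - (Fintype.card (a ⟶ b) : ℚ)) *
          (Nat.card (Quiver.Path b c) : ℚ) = if a = c then 1 else 0) ∧
     (∀ a c : V,
        ∑ b : V, (Nat.card (Quiver.Path a b) : ℚ) *
          ((if b = c then 1 else 0) - (Fintype.card (b ⟶ c) : ℚ)) =
          if a = c then 1 else 0)) ∧
    -- its Euler characteristic is defined and equals `|G₀| - |G₁|`
    (∃ k k' : V → ℚ,
      (∀ a : V, ∑ b : V, (Nat.card (Quiver.Path a b) : ℚ) * k b = 1) ∧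
      (∀ b : V, ∑ a : V, k' a * (Nat.card (Quiver.Path a b) : ℚ) = 1) ∧
      ∑ a : V, k a =
        (Fintype.card V : ℚ) - ∑ a : V, ∑ b : V, (Fintype.card (a ⟶ b) : ℚ) ∧
      ∑ a : V, k' a =
        (Fintype.card V : ℚ) - ∑ a : V, ∑ b : V, (Fintype.card (a ⟶ b) : ℚ)) := by
  have finitePath := Quiver.Path.finite_of_circuitFree circuitFree
  set Z := Quiver.pathCountMatrix ℚ V
  set μ := 1 - Quiver.edgeCountMatrix ℚ V
  have hZμ : Z * μ = 1 := Quiver.pathCountMatrix_mul_one_sub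
  have hμZ : μ * Z = 1 := Quiver.one_sub_mul_pathCountMatrix
  have hμ : ∑ a, ∑ b, μ a b = Fintype.card V - ∑ a : V, ∑ b : V, (Fintype.card (a ⟶ b) : ℚ) := by
    simp [μ, Finset.sum_sub_distrib, one_apply, Quiver.edgeCountMatrix, Nat.card_eq_fintype_card]
  refine ⟨finitePath, ⟨fun a c => ?_, fun a c => ?_⟩, μ *ᵥ 1, 1 ᵥ* μ, fun a => ?_, fun b => ?_,
    (sum_mulVec_one μ).trans hμ, (sum_one_vecMul μ).trans hμ⟩
  · simpa [μ, Z, mul_apply, one_apply, Quiver.pathCountMatrix, Quiver.edgeCountMatrix,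
      Nat.card_eq_fintype_card] using congrFun₂ hμZ a c
  · simpa [μ, Z, mul_apply, one_apply, Quiver.pathCountMatrix, Quiver.edgeCountMatrix,
      Nat.card_eq_fintype_card] using congrFun₂ hZμ a c
  · simpa [mulVec, dotProduct, Z, Quiver.pathCountMatrix] using
      congrFun (mulVec_mulVec_one_of_mul_eq_one hZμ) a
  · simpa [vecMul, dotProduct, Z, Quiver.pathCountMatrix] using
      congrFun (vecMul_vecMul_one_of_mul_eq_one hμZ) b
end

section
/- Let A be a finite skeletal category containing no endomorphisms except identities, and let F : A → A be an endofunctor. Then the category Alg(F) of F-algebras, the category Fix(F) of strict fixed points of F, and the category Coalg(F) of F-coalgebras all have Euler characteristic, and χ(Alg(F)) = χ(Fix(F)) = χ(Coalg(F)). -/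
open scoped Matrix



open CategoryTheory

/-- A weighting on a category: `∑_b ζ(a,b) k(b) = 1` for all `a`, where
`ζ(a,b)` is the number of morphisms `a ⟶ b`.  (Stated with `finsum` and
`Nat.card` so that it applies to any category; for finite categories it is the
usual notion.) -/
def CatWeighting (C : Type u) [Category.{v} C] (k : C → ℚ) : Prop :=
  ∀ a : C, ∑ᶠ b : C, (Nat.card (a ⟶ b) : ℚ) * k b = 1

/-- A coweighting on a category. -/
def CatCoweighting (C : Type u) [Category.{v} C] (k : C → ℚ) : Prop :=
  ∀ b : C, ∑ᶠ a : C, k a * (Nat.card (a ⟶ b) : ℚ) = 1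

/-- `C` has Euler characteristic `χ`: it admits a weighting and a coweighting,
whose total weight and coweight are both `χ`. -/
def HasEulerCharacteristic (C : Type u) [Category.{v} C] (χ : ℚ) : Prop :=
  ∃ k k' : C → ℚ, CatWeighting C k ∧ CatCoweighting C k' ∧
    (∑ᶠ a : C, k a) = χ ∧ (∑ᶠ a : C, k' a) = χ

/-- The category of strict fixed points of an endofunctor `F`: objects are
objects `a` with `F.obj a = a`, morphisms are morphisms `f` with `F.map f = f`
(modulo the identifications `F.obj a = a`, `F.obj b = b`). -/
structure FixCat {C : Type u} [Category.{v} C] (F : C ⥤ C) where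
  obj : C
  fix : F.obj obj = obj

instance {C : Type u} [Category.{v} C] (F : C ⥤ C) : Category (FixCat F) where
  Hom a b := {f : a.obj ⟶ b.obj //
    F.map f = eqToHom a.fix ≫ f ≫ eqToHom b.fix.symm}
  id a := ⟨𝟙 a.obj, by simp⟩
  comp f g := ⟨f.1 ≫ g.1, by simp [f.2, g.2]⟩
  id_comp f := Subtype.ext (Category.id_comp f.1)
  comp_id f := Subtype.ext (Category.comp_id f.1)
  assoc f g h := Subtype.ext (Category.assoc f.1 g.1 h.1)


lemma eq_eqToHom_of_endo {C : Type u} [Category.{v} C]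
    (hEndo : ∀ (x : C) (f : x ⟶ x), f = 𝟙 x)
    {x y : C} (e : x = y) (f : x ⟶ y) : f = eqToHom e := by
  subst e; simpa using hEndo x f

lemma exists_weight_coweight (C : Type u) [Category.{v} C] [Fintype C]
    [∀ x y : C, Fintype (x ⟶ y)]
    (hEndo : ∀ (x : C) (f : x ⟶ x), f = 𝟙 x)
    (hAnti : ∀ x y : C, (x ⟶ y) → (y ⟶ x) → x = y) :
    ∃ k k' : C → ℚ, CatWeighting C k ∧ CatCoweighting C k' := by
  classical
  set rank : C → ℕ := fun x => (Finset.univ.filter (fun z : C => Nonempty (z ⟶ x))).card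
    with hrank
  have hmono : ∀ x y : C, (x ⟶ y) → x ≠ y → rank x < rank y := by
    intro x y f hxy
    apply Finset.card_lt_card
    constructor
    · intro z hz
      simp only [Finset.mem_filter, Finset.mem_univ, true_and] at hz ⊢
      exact ⟨hz.some ≫ f⟩
    · intro hsub
      have hy : y ∈ Finset.univ.filter (fun z : C => Nonempty (z ⟶ y)) := by
        simp only [Finset.mem_filter, Finset.mem_univ, true_and]; exact ⟨𝟙 y⟩
      have := hsub hy
      simp only [Finset.mem_filter, Finset.mem_univ, true_and] at this
      exact hxy (hAnti x y f this.some)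
  set M : Matrix C C ℚ := Matrix.of (fun x y => (Nat.card (x ⟶ y) : ℚ)) with hM
  have hzero : ∀ x y : C, rank y < rank x → M x y = 0 := by
    intro x y hlt
    by_cases hne : Nonempty (x ⟶ y)
    · rcases eq_or_ne x y with rfl | h
      · omega
      · exact absurd (hmono x y hne.some h) (by omega)
    · simp only [hM, Matrix.of_apply]
      haveI := not_nonempty_iff.mp hne
      rw [Nat.card_of_isEmpty]
      simp
  have hBT : M.BlockTriangular rank := fun i j h => hzero i j h
  have hdiag : ∀ x : C, M x x = 1 := by
    intro x
    have : Nat.card (x ⟶ x) = 1 := by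
      rw [Nat.card_eq_one_iff_unique]
      exact ⟨⟨fun f g => by rw [hEndo x f, hEndo x g]⟩, ⟨𝟙 x⟩⟩
    simp only [hM, Matrix.of_apply, this, Nat.cast_one]
  have hdet : M.det = 1 := by
    rw [hBT.det]
    apply Finset.prod_eq_one
    intro n _
    have : M.toSquareBlock rank n = 1 := by
      ext i j
      rcases eq_or_ne i j with rfl | hij
      · simp [Matrix.toSquareBlock_def, hdiag, Matrix.one_apply]
      · have hij' : (i : C) ≠ (j : C) := fun h => hij (Subtype.ext h)
        have h0 : M (i : C) (j : C) = 0 := by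
          by_cases hne : Nonempty ((i : C) ⟶ (j : C))
          · have := hmono _ _ hne.some hij'
            rw [i.2, j.2] at this
            omega
          · simp only [hM, Matrix.of_apply]
            haveI := not_nonempty_iff.mp hne
            rw [Nat.card_of_isEmpty]
            simp
        simp [Matrix.toSquareBlock_def, h0, Matrix.one_apply, hij]
    rw [this, Matrix.det_one]
  have hU : IsUnit M.det := hdet ▸ isUnit_one
  refine ⟨M⁻¹ *ᵥ (fun _ => 1), (fun _ => 1) ᵥ* M⁻¹, ?_, ?_⟩
  · intro a
    rw [finsum_eq_sum_of_fintype]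
    have h1 : (M *ᵥ (M⁻¹ *ᵥ (fun _ => (1:ℚ)))) a = 1 := by
      rw [Matrix.mulVec_mulVec, Matrix.mul_nonsing_inv _ hU, Matrix.one_mulVec]
    exact h1
  · intro b
    rw [finsum_eq_sum_of_fintype]
    have h1 : (((fun _ => (1:ℚ)) ᵥ* M⁻¹) ᵥ* M) b = 1 := by
      rw [Matrix.vecMul_vecMul, Matrix.nonsing_inv_mul _ hU, Matrix.vecMul_one]
    exact h1

lemma total_coweight_eq_total_weight (C : Type u) [Category.{v} C] [Fintype C]
    [∀ x y : C, Fintype (x ⟶ y)] {k k' : C → ℚ}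
    (hk : CatWeighting C k) (hk' : CatCoweighting C k') :
    ∑ᶠ a : C, k' a = ∑ᶠ a : C, k a := by
  rw [finsum_eq_sum_of_fintype, finsum_eq_sum_of_fintype]
  calc ∑ a : C, k' a
      = ∑ a : C, k' a * ∑ b : C, (Nat.card (a ⟶ b) : ℚ) * k b := by
        refine Finset.sum_congr rfl fun a _ => ?_
        rw [show ∑ b : C, (Nat.card (a ⟶ b) : ℚ) * k b = 1 by
          rw [← finsum_eq_sum_of_fintype]; exact hk a, mul_one]
    _ = ∑ b : C, (∑ a : C, k' a * (Nat.card (a ⟶ b) : ℚ)) * k b := by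
        simp_rw [Finset.mul_sum, Finset.sum_mul]
        rw [Finset.sum_comm]
        simp [mul_assoc]
    _ = ∑ b : C, k b := by
        refine Finset.sum_congr rfl fun b _ => ?_
        rw [show ∑ a : C, k' a * (Nat.card (a ⟶ b) : ℚ) = 1 by
          rw [← finsum_eq_sum_of_fintype]; exact hk' b, one_mul]

namespace Stmt13

variable {A : Type u} [Category.{v} A] (F : A ⥤ A)

/-- Iterated application of `F` to an object. -/
@[reducible] def ob (a : A) : ℕ → A
  | 0 => a
  | n + 1 => F.obj (ob a n)

/-- `F^n` applied to the structure map of an algebra. -/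
def u (x : Endofunctor.Algebra F) : (n : ℕ) → (ob F x.a (n + 1) ⟶ ob F x.a n)
  | 0 => x.str
  | n + 1 => F.map (u x n)

/-- The composite `ob n ⟶ x.a` of the maps `u`. -/
def w (x : Endofunctor.Algebra F) : (n : ℕ) → (ob F x.a n ⟶ x.a)
  | 0 => 𝟙 x.a
  | n + 1 => u F x n ≫ w x n

/-- Downward chains. -/
def chain (x : Endofunctor.Algebra F) (m : ℕ) : (k : ℕ) → (ob F x.a (m + k) ⟶ ob F x.a m)
  | 0 => 𝟙 _
  | k + 1 => u F x (m + k) ≫ chain x m k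

lemma exists_stab [Finite A] (hAnti : ∀ a b : A, (a ⟶ b) → (b ⟶ a) → a = b)
    (x : Endofunctor.Algebra F) : ∃ N, ob F x.a (N + 1) = ob F x.a N := by
  obtain ⟨i, j, hne, hij⟩ := Finite.exists_ne_map_eq_of_infinite (fun n => ob F x.a n)
  replace hij : ob F x.a i = ob F x.a j := hij
  rcases hne.lt_or_gt with h | h
  · refine ⟨i, hAnti _ _ (u F x i) ?_⟩
    have he : i + 1 + (j - (i + 1)) = j := by omega
    exact eqToHom (hij.trans (congrArg (ob F x.a) he.symm)) ≫ chain F x (i + 1) (j - (i + 1))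
  · refine ⟨j, hAnti _ _ (u F x j) ?_⟩
    have he : j + 1 + (i - (j + 1)) = i := by omega
    exact eqToHom (hij.symm.trans (congrArg (ob F x.a) he.symm)) ≫ chain F x (j + 1) (i - (j + 1))

lemma stab_forever {a : A} {N : ℕ} (h : ob F a (N + 1) = ob F a N) (k : ℕ) :
    ob F a (N + k) = ob F a N := by
  induction k with
  | zero => rfl
  | succ k ih => exact (congrArg F.obj ih).trans h

lemma w_natural (x : Endofunctor.Algebra F) (n : ℕ) :
    F.map (w F x n) ≫ x.str = w F x (n + 1) := by
  induction n with
  | zero =>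
      show F.map (𝟙 x.a) ≫ x.str = x.str ≫ 𝟙 x.a
      simp
  | succ n ih =>
      show F.map (u F x n ≫ w F x n) ≫ x.str = _
      rw [F.map_comp, Category.assoc, ih]
      rfl

/-- Iterated application of `F` to a morphism out of a fixed point. -/
def pow (c : FixCat F) (x : Endofunctor.Algebra F) (f : c.obj ⟶ x.a) :
    (n : ℕ) → (c.obj ⟶ ob F x.a n)
  | 0 => f
  | n + 1 => eqToHom c.fix.symm ≫ F.map (pow c x f n)

lemma pow_comp_u (c : FixCat F) (x : Endofunctor.Algebra F) (f : c.obj ⟶ x.a)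
    (hf : F.map f ≫ x.str = eqToHom c.fix ≫ f) (n : ℕ) :
    pow F c x f (n + 1) ≫ u F x n = pow F c x f n := by
  induction n with
  | zero =>
      show (eqToHom c.fix.symm ≫ F.map f) ≫ x.str = f
      rw [Category.assoc, hf]
      simp
  | succ n ih =>
      show (eqToHom c.fix.symm ≫ F.map (pow F c x f (n + 1))) ≫ F.map (u F x n) = _
      rw [Category.assoc, ← F.map_comp, ih]
      rfl

lemma pow_comp_w (c : FixCat F) (x : Endofunctor.Algebra F) (f : c.obj ⟶ x.a)
    (hf : F.map f ≫ x.str = eqToHom c.fix ≫ f) (n : ℕ) :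
    pow F c x f n ≫ w F x n = f := by
  induction n with
  | zero =>
      show f ≫ 𝟙 x.a = f
      simp
  | succ n ih =>
      show pow F c x f (n + 1) ≫ (u F x n ≫ w F x n) = f
      rw [← Category.assoc, pow_comp_u F c x f hf n, ih]

/-- `F^k` applied to `w N`. -/
def bigW (x : Endofunctor.Algebra F) (N : ℕ) : (k : ℕ) → (ob F x.a (N + k) ⟶ ob F x.a k)
  | 0 => w F x N
  | k + 1 => F.map (bigW x N k)

lemma pow_w_eq (c : FixCat F) (x : Endofunctor.Algebra F) {N : ℕ}
    (hN : ob F x.a (N + 1) = ob F x.a N)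
    (g : c.obj ⟶ ob F x.a N)
    (hg : F.map g = eqToHom c.fix ≫ g ≫ eqToHom hN.symm) (k : ℕ) :
    pow F c x (g ≫ w F x N) k
      = g ≫ eqToHom (stab_forever F hN k).symm ≫ bigW F x N k := by
  induction k with
  | zero =>
      show g ≫ w F x N = g ≫ eqToHom (stab_forever F hN 0).symm ≫ w F x N
      simp
  | succ k ih =>
      show eqToHom c.fix.symm ≫ F.map (pow F c x (g ≫ w F x N) k) = _
      rw [ih, F.map_comp, F.map_comp, hg, eqToHom_map]
      show _ = g ≫ eqToHom (stab_forever F hN (k + 1)).symm ≫ F.map (bigW F x N k)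
      simp [eqToHom_trans]

/-- The algebra associated to a fixed point. -/
@[reducible] def I_alg (c : FixCat F) : Endofunctor.Algebra F := ⟨c.obj, eqToHom c.fix⟩

/-- The key bijection: maps in `Fix F` from `c` to the stabilization of an
algebra `x` correspond to algebra maps from `c` to `x`. -/
def algHomEquiv (hEndo : ∀ (a : A) (f : a ⟶ a), f = 𝟙 a)
    (x : Endofunctor.Algebra F) {N : ℕ} (hN : ob F x.a (N + 1) = ob F x.a N)
    (c : FixCat F) :
    (c ⟶ (⟨ob F x.a N, hN⟩ : FixCat F)) ≃ (I_alg F c ⟶ x) where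
  toFun g := ⟨g.1 ≫ w F x N, by
    have hu : u F x N = eqToHom hN := eq_eqToHom_of_endo hEndo hN _
    have hg : F.map g.1 = eqToHom c.fix ≫ g.1 ≫ eqToHom hN.symm := g.2
    erw [F.map_comp, Category.assoc, w_natural, hg]
    show _ = eqToHom c.fix ≫ g.1 ≫ w F x N
    rw [show w F x (N + 1) = u F x N ≫ w F x N from rfl, hu]
    simp⟩
  invFun f := ⟨pow F c x f.f N, by
    have hf : F.map f.f ≫ x.str = eqToHom c.fix ≫ f.f := f.h
    have hu : u F x N = eqToHom hN := eq_eqToHom_of_endo hEndo hN _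
    have h2 : pow F c x f.f (N + 1) = pow F c x f.f N ≫ eqToHom hN.symm := by
      rw [← pow_comp_u F c x f.f hf N, hu]
      simp
    have h3 : F.map (pow F c x f.f N) = eqToHom c.fix ≫ pow F c x f.f (N + 1) := by
      rw [show pow F c x f.f (N + 1)
        = eqToHom c.fix.symm ≫ F.map (pow F c x f.f N) from rfl]
      simp
    rw [h3, h2]⟩
  left_inv g := by
    apply Subtype.ext
    show pow F c x (g.1 ≫ w F x N) N = g.1
    have hg : F.map g.1 = eqToHom c.fix ≫ g.1 ≫ eqToHom hN.symm := g.2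
    rw [pow_w_eq F c x hN g.1 hg N]
    have hb : bigW F x N N = eqToHom (stab_forever F hN N) :=
      eq_eqToHom_of_endo hEndo _ _
    rw [hb]
    simp
  right_inv f := by
    apply Endofunctor.Algebra.Hom.ext
    show pow F c x f.f N ≫ w F x N = f.f
    exact pow_comp_w F c x f.f f.h N

/-! ### Dual constructions for coalgebras -/

def u' (x : Endofunctor.Coalgebra F) : (n : ℕ) → (ob F x.V n ⟶ ob F x.V (n + 1))
  | 0 => x.str
  | n + 1 => F.map (u' x n)

def w' (x : Endofunctor.Coalgebra F) : (n : ℕ) → (x.V ⟶ ob F x.V n)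
  | 0 => 𝟙 x.V
  | n + 1 => w' x n ≫ u' F x n

def chain' (x : Endofunctor.Coalgebra F) (m : ℕ) :
    (k : ℕ) → (ob F x.V m ⟶ ob F x.V (m + k))
  | 0 => 𝟙 _
  | k + 1 => chain' x m k ≫ u' F x (m + k)

lemma exists_stab' [Finite A] (hAnti : ∀ a b : A, (a ⟶ b) → (b ⟶ a) → a = b)
    (x : Endofunctor.Coalgebra F) : ∃ N, ob F x.V (N + 1) = ob F x.V N := by
  obtain ⟨i, j, hne, hij⟩ := Finite.exists_ne_map_eq_of_infinite (fun n => ob F x.V n)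
  replace hij : ob F x.V i = ob F x.V j := hij
  rcases hne.lt_or_gt with h | h
  · refine ⟨i, hAnti _ _ ?_ (u' F x i)⟩
    have he : i + 1 + (j - (i + 1)) = j := by omega
    exact chain' F x (i + 1) (j - (i + 1)) ≫
      eqToHom ((congrArg (ob F x.V) he).trans hij.symm)
  · refine ⟨j, hAnti _ _ ?_ (u' F x j)⟩
    have he : j + 1 + (i - (j + 1)) = i := by omega
    exact chain' F x (j + 1) (i - (j + 1)) ≫
      eqToHom ((congrArg (ob F x.V) he).trans hij)

lemma w'_natural (x : Endofunctor.Coalgebra F) (n : ℕ) :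
    x.str ≫ F.map (w' F x n) = w' F x (n + 1) := by
  induction n with
  | zero =>
      show x.str ≫ F.map (𝟙 x.V) = 𝟙 x.V ≫ x.str
      simp
  | succ n ih =>
      show x.str ≫ F.map (w' F x n ≫ u' F x n) = _
      rw [F.map_comp, ← Category.assoc, ih]
      rfl

def pow' (c : FixCat F) (x : Endofunctor.Coalgebra F) (f : x.V ⟶ c.obj) :
    (n : ℕ) → (ob F x.V n ⟶ c.obj)
  | 0 => f
  | n + 1 => F.map (pow' c x f n) ≫ eqToHom c.fix

lemma u'_comp_pow' (c : FixCat F) (x : Endofunctor.Coalgebra F) (f : x.V ⟶ c.obj)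
    (hf : x.str ≫ F.map f = f ≫ eqToHom c.fix.symm) (n : ℕ) :
    u' F x n ≫ pow' F c x f (n + 1) = pow' F c x f n := by
  induction n with
  | zero =>
      show x.str ≫ (F.map f ≫ eqToHom c.fix) = f
      rw [← Category.assoc, hf]
      simp
  | succ n ih =>
      show F.map (u' F x n) ≫ (F.map (pow' F c x f (n + 1)) ≫ eqToHom c.fix) = _
      rw [← Category.assoc, ← F.map_comp, ih]
      rfl

lemma w'_comp_pow' (c : FixCat F) (x : Endofunctor.Coalgebra F) (f : x.V ⟶ c.obj)
    (hf : x.str ≫ F.map f = f ≫ eqToHom c.fix.symm) (n : ℕ) :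
    w' F x n ≫ pow' F c x f n = f := by
  induction n with
  | zero =>
      show 𝟙 x.V ≫ f = f
      simp
  | succ n ih =>
      show (w' F x n ≫ u' F x n) ≫ pow' F c x f (n + 1) = f
      rw [Category.assoc, u'_comp_pow' F c x f hf n, ih]

def bigW' (x : Endofunctor.Coalgebra F) (N : ℕ) :
    (k : ℕ) → (ob F x.V k ⟶ ob F x.V (N + k))
  | 0 => w' F x N
  | k + 1 => F.map (bigW' x N k)

lemma pow'_w_eq (c : FixCat F) (x : Endofunctor.Coalgebra F) {N : ℕ}
    (hN : ob F x.V (N + 1) = ob F x.V N)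
    (g : ob F x.V N ⟶ c.obj)
    (hg : F.map g = eqToHom hN ≫ g ≫ eqToHom c.fix.symm) (k : ℕ) :
    pow' F c x (w' F x N ≫ g) k
      = bigW' F x N k ≫ eqToHom (stab_forever F hN k) ≫ g := by
  induction k with
  | zero =>
      show w' F x N ≫ g = w' F x N ≫ eqToHom (stab_forever F hN 0) ≫ g
      simp
  | succ k ih =>
      show F.map (pow' F c x (w' F x N ≫ g) k) ≫ eqToHom c.fix = _
      rw [ih, F.map_comp, F.map_comp, hg, eqToHom_map]
      show _ = F.map (bigW' F x N k) ≫ eqToHom (stab_forever F hN (k + 1)) ≫ g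
      simp [eqToHom_trans]

@[reducible] def I_coalg (c : FixCat F) : Endofunctor.Coalgebra F := ⟨c.obj, eqToHom c.fix.symm⟩

def coalgHomEquiv (hEndo : ∀ (a : A) (f : a ⟶ a), f = 𝟙 a)
    (x : Endofunctor.Coalgebra F) {N : ℕ} (hN : ob F x.V (N + 1) = ob F x.V N)
    (c : FixCat F) :
    ((⟨ob F x.V N, hN⟩ : FixCat F) ⟶ c) ≃ (x ⟶ I_coalg F c) where
  toFun g := ⟨w' F x N ≫ g.1, by
    have hu : u' F x N = eqToHom hN.symm := eq_eqToHom_of_endo hEndo hN.symm _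
    have hg : F.map g.1 = eqToHom hN ≫ g.1 ≫ eqToHom c.fix.symm := g.2
    erw [F.map_comp, ← Category.assoc, w'_natural, hg,
      show w' F x (N + 1) = w' F x N ≫ u' F x N from rfl, hu]
    simp [I_coalg]⟩
  invFun f := ⟨pow' F c x f.f N, by
    have hf : x.str ≫ F.map f.f = f.f ≫ eqToHom c.fix.symm := f.h
    have hu : u' F x N = eqToHom hN.symm := eq_eqToHom_of_endo hEndo hN.symm _
    have h2 : pow' F c x f.f (N + 1) = eqToHom hN ≫ pow' F c x f.f N := by
      rw [← u'_comp_pow' F c x f.f hf N, hu]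
      simp
    have h3 : F.map (pow' F c x f.f N) = pow' F c x f.f (N + 1) ≫ eqToHom c.fix.symm := by
      rw [show pow' F c x f.f (N + 1)
        = F.map (pow' F c x f.f N) ≫ eqToHom c.fix from rfl]
      simp
    rw [h3, h2]
    simp⟩
  left_inv g := by
    apply Subtype.ext
    show pow' F c x (w' F x N ≫ g.1) N = g.1
    have hg : F.map g.1 = eqToHom hN ≫ g.1 ≫ eqToHom c.fix.symm := g.2
    rw [pow'_w_eq F c x hN g.1 hg N]
    have hb : bigW' F x N N = eqToHom (stab_forever F hN N).symm :=
      eq_eqToHom_of_endo hEndo _ _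
    rw [hb]
    simp
  right_inv f := by
    apply Endofunctor.Coalgebra.Hom.ext
    show w' F x N ≫ pow' F c x f.f N = f.f
    exact w'_comp_pow' F c x f.f f.h N

end Stmt13


open Stmt13

/-- **Proposition 2.13** (Leinster). For an endofunctor `F` of a finite
skeletal category with no endomorphisms except identities, the categories of
`F`-algebras, of strict fixed points of `F`, and of `F`-coalgebras all have
Euler characteristic, and these Euler characteristics coincide. -/
theorem stmt_13 {A : Type u} [Category.{v} A] [Fintype A]
    [∀ a b : A, Fintype (a ⟶ b)]
    (skel : CategoryTheory.Skeletal A)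
    (endo : ∀ (a : A) (f : a ⟶ a), f = 𝟙 a)
    (F : A ⥤ A) :
    ∃ χ : ℚ,
      HasEulerCharacteristic (Endofunctor.Algebra F) χ ∧
      HasEulerCharacteristic (FixCat F) χ ∧
      HasEulerCharacteristic (Endofunctor.Coalgebra F) χ := by
  classical
  have hAnti : ∀ a b : A, (a ⟶ b) → (b ⟶ a) → a = b := fun a b f g =>
    skel ⟨{ hom := f, inv := g, hom_inv_id := endo _ _, inv_hom_id := endo _ _ }⟩
  -- finiteness
  haveI : Finite (Endofunctor.Algebra F) := by
    apply Finite.of_injective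
      (fun x : Endofunctor.Algebra F => (⟨x.a, x.str⟩ : Σ a : A, (F.obj a ⟶ a)))
    intro x y h
    obtain ⟨a, s⟩ := x
    obtain ⟨b, t⟩ := y
    have h1 : a = b := congrArg Sigma.fst h
    subst h1
    have h2 : s = t := by injection h
    rw [h2]
  haveI : Fintype (Endofunctor.Algebra F) := Fintype.ofFinite _
  haveI : ∀ x y : Endofunctor.Algebra F, Finite (x ⟶ y) := fun x y =>
    Finite.of_injective (fun f => f.f) (fun f g h => Endofunctor.Algebra.Hom.ext h)
  haveI : ∀ x y : Endofunctor.Algebra F, Fintype (x ⟶ y) := fun x y => Fintype.ofFinite _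
  haveI : Finite (FixCat F) := by
    apply Finite.of_injective (fun c : FixCat F => c.obj)
    rintro ⟨a, ha⟩ ⟨b, hb⟩ h
    dsimp at h
    subst h
    rfl
  haveI : Fintype (FixCat F) := Fintype.ofFinite _
  haveI : ∀ c d : FixCat F, Fintype (c ⟶ d) := fun c d =>
    Fintype.ofFinite {f : c.obj ⟶ d.obj //
      F.map f = eqToHom c.fix ≫ f ≫ eqToHom d.fix.symm}
  haveI : Finite (Endofunctor.Coalgebra F) := by
    apply Finite.of_injective
      (fun x : Endofunctor.Coalgebra F => (⟨x.V, x.str⟩ : Σ a : A, (a ⟶ F.obj a)))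
    intro x y h
    obtain ⟨a, s⟩ := x
    obtain ⟨b, t⟩ := y
    have h1 : a = b := congrArg Sigma.fst h
    subst h1
    have h2 : s = t := by injection h
    rw [h2]
  haveI : Fintype (Endofunctor.Coalgebra F) := Fintype.ofFinite _
  haveI : ∀ x y : Endofunctor.Coalgebra F, Finite (x ⟶ y) := fun x y =>
    Finite.of_injective (fun f => f.f) (fun f g h => Endofunctor.Coalgebra.Hom.ext h)
  haveI : ∀ x y : Endofunctor.Coalgebra F, Fintype (x ⟶ y) := fun x y => Fintype.ofFinite _
  -- endomorphism and antisymmetry conditions in the three categories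
  have endoAlg : ∀ (x : Endofunctor.Algebra F) (f : x ⟶ x), f = 𝟙 x := fun x f =>
    Endofunctor.Algebra.Hom.ext (endo _ f.f)
  have antiAlg : ∀ x y : Endofunctor.Algebra F, (x ⟶ y) → (y ⟶ x) → x = y := by
    intro x y f g
    have e : x.a = y.a := hAnti _ _ f.f g.f
    obtain ⟨a, s⟩ := x
    obtain ⟨b, t⟩ := y
    dsimp at e
    subst e
    have hfa : f.f = 𝟙 a := endo _ _
    have hh2 : F.map (𝟙 a) ≫ t = s ≫ 𝟙 a := by rw [← hfa]; exact f.h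
    simp only [CategoryTheory.Functor.map_id, Category.id_comp, Category.comp_id] at hh2
    rw [hh2]
  have endoFix : ∀ (c : FixCat F) (f : c ⟶ c), f = 𝟙 c := fun c f =>
    Subtype.ext (endo _ f.1)
  have antiFix : ∀ c d : FixCat F, (c ⟶ d) → (d ⟶ c) → c = d := by
    intro c d f g
    have e : c.obj = d.obj := hAnti _ _ f.1 g.1
    obtain ⟨a, ha⟩ := c
    obtain ⟨b, hb⟩ := d
    dsimp at e
    subst e
    rfl
  have endoCoalg : ∀ (x : Endofunctor.Coalgebra F) (f : x ⟶ x), f = 𝟙 x := fun x f =>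
    Endofunctor.Coalgebra.Hom.ext (endo _ f.f)
  have antiCoalg : ∀ x y : Endofunctor.Coalgebra F, (x ⟶ y) → (y ⟶ x) → x = y := by
    intro x y f g
    have e : x.V = y.V := hAnti _ _ f.f g.f
    obtain ⟨a, s⟩ := x
    obtain ⟨b, t⟩ := y
    dsimp at e
    subst e
    have hfa : f.f = 𝟙 a := endo _ _
    have hh2 : s ≫ F.map (𝟙 a) = 𝟙 a ≫ t := by rw [← hfa]; exact f.h
    simp only [CategoryTheory.Functor.map_id, Category.id_comp, Category.comp_id] at hh2
    rw [hh2]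
  -- generic weightings and coweightings
  obtain ⟨wA, cA, hwA, hcA⟩ := exists_weight_coweight (Endofunctor.Algebra F) endoAlg antiAlg
  obtain ⟨wX, cX, hwX, hcX⟩ := exists_weight_coweight (FixCat F) endoFix antiFix
  obtain ⟨wC, cC, hwC, hcC⟩ :=
    exists_weight_coweight (Endofunctor.Coalgebra F) endoCoalg antiCoalg
  -- stabilizations
  choose NA hNA using fun x : Endofunctor.Algebra F => exists_stab F hAnti x
  choose NC hNC using fun x : Endofunctor.Coalgebra F => exists_stab' F hAnti x
  set R : Endofunctor.Algebra F → FixCat F :=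
    fun x => ⟨ob F x.a (NA x), hNA x⟩ with hR
  set R' : Endofunctor.Coalgebra F → FixCat F :=
    fun x => ⟨ob F x.V (NC x), hNC x⟩ with hR'
  have hcard : ∀ (c : FixCat F) (y : Endofunctor.Algebra F),
      (Nat.card (I_alg F c ⟶ y) : ℚ) = (Nat.card (c ⟶ R y) : ℚ) := fun c y => by
    rw [Nat.card_congr (algHomEquiv F endo y (hNA y) c).symm]
  have hcard' : ∀ (c : FixCat F) (y : Endofunctor.Coalgebra F),
      (Nat.card (y ⟶ I_coalg F c) : ℚ) = (Nat.card (R' y ⟶ c) : ℚ) := fun c y => by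
    rw [Nat.card_congr (coalgHomEquiv F endo y (hNC y) c).symm]
  -- the coweighting on algebras supported on fixed points
  set kA : Endofunctor.Algebra F → ℚ :=
    fun x => ∑ c ∈ Finset.univ.filter (fun c => I_alg F c = x), cX c with hkAdef
  have hkA : CatCoweighting (Endofunctor.Algebra F) kA := by
    intro y
    rw [finsum_eq_sum_of_fintype]
    have step : ∑ x : Endofunctor.Algebra F, kA x * (Nat.card (x ⟶ y) : ℚ)
        = ∑ c : FixCat F, cX c * (Nat.card (I_alg F c ⟶ y) : ℚ) := by
      rw [← Finset.sum_fiberwise Finset.univ (fun c => I_alg F c)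
        (fun c => cX c * (Nat.card (I_alg F c ⟶ y) : ℚ))]
      refine Finset.sum_congr rfl fun x _ => ?_
      rw [hkAdef]
      dsimp only
      rw [Finset.sum_mul]
      refine Finset.sum_congr rfl fun c hc => ?_
      have hcx : I_alg F c = x := (Finset.mem_filter.mp hc).2
      rw [hcx]
    rw [step]
    have : ∑ c : FixCat F, cX c * (Nat.card (I_alg F c ⟶ y) : ℚ)
        = ∑ c : FixCat F, cX c * (Nat.card (c ⟶ R y) : ℚ) :=
      Finset.sum_congr rfl fun c _ => by rw [hcard]
    rw [this, ← finsum_eq_sum_of_fintype]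
    exact hcX (R y)
  have hkAtot : ∑ᶠ x : Endofunctor.Algebra F, kA x = ∑ᶠ c : FixCat F, cX c := by
    rw [finsum_eq_sum_of_fintype, finsum_eq_sum_of_fintype]
    exact Finset.sum_fiberwise Finset.univ (fun c => I_alg F c) cX
  -- the weighting on coalgebras supported on fixed points
  set kC : Endofunctor.Coalgebra F → ℚ :=
    fun y => ∑ c ∈ Finset.univ.filter (fun c => I_coalg F c = y), wX c with hkCdef
  have hkC : CatWeighting (Endofunctor.Coalgebra F) kC := by
    intro x
    rw [finsum_eq_sum_of_fintype]
    have step : ∑ y : Endofunctor.Coalgebra F, (Nat.card (x ⟶ y) : ℚ) * kC y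
        = ∑ c : FixCat F, (Nat.card (x ⟶ I_coalg F c) : ℚ) * wX c := by
      rw [← Finset.sum_fiberwise Finset.univ (fun c => I_coalg F c)
        (fun c => (Nat.card (x ⟶ I_coalg F c) : ℚ) * wX c)]
      refine Finset.sum_congr rfl fun y _ => ?_
      rw [hkCdef]
      dsimp only
      rw [Finset.mul_sum]
      refine Finset.sum_congr rfl fun c hc => ?_
      have hcy : I_coalg F c = y := (Finset.mem_filter.mp hc).2
      rw [hcy]
    rw [step]
    have : ∑ c : FixCat F, (Nat.card (x ⟶ I_coalg F c) : ℚ) * wX c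
        = ∑ c : FixCat F, (Nat.card (R' x ⟶ c) : ℚ) * wX c :=
      Finset.sum_congr rfl fun c _ => by rw [hcard']
    rw [this, ← finsum_eq_sum_of_fintype]
    exact hwX (R' x)
  have hkCtot : ∑ᶠ y : Endofunctor.Coalgebra F, kC y = ∑ᶠ c : FixCat F, wX c := by
    rw [finsum_eq_sum_of_fintype, finsum_eq_sum_of_fintype]
    exact Finset.sum_fiberwise Finset.univ (fun c => I_coalg F c) wX
  -- assembly
  have hFixTot : ∑ᶠ c : FixCat F, cX c = ∑ᶠ c : FixCat F, wX c :=
    total_coweight_eq_total_weight (FixCat F) hwX hcX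
  refine ⟨∑ᶠ c : FixCat F, wX c, ⟨wA, kA, hwA, hkA, ?_, ?_⟩,
    ⟨wX, cX, hwX, hcX, rfl, hFixTot⟩, ⟨kC, cC, hkC, hcC, hkCtot, ?_⟩⟩
  · rw [← total_coweight_eq_total_weight (Endofunctor.Algebra F) hwA hkA,
      hkAtot, hFixTot]
  · rw [hkAtot, hFixTot]
  · rw [total_coweight_eq_total_weight (Endofunctor.Coalgebra F) hkC hcC, hkCtot]
end

section
/- Let A be a finite category that has Möbius inversion with Möbius function μ. Then for all objects a, b of A, if there are no morphisms from a to b (i.e. ζ(a,b) = 0), then μ(a,b) = 0. -/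
open CategoryTheory

open scoped Classical in
/-- **Theorem 4.1** (Leinster). If a finite category `A` has Möbius inversion
`μ`, then for all objects `a, b`, `ζ(a,b) = 0` implies `μ(a,b) = 0`. -/
theorem stmt_16 {A : Type u} [Category.{v} A] [Fintype A]
    [∀ a b : A, Fintype (a ⟶ b)]
    (μ : A → A → ℚ)
    (hμ₁ : ∀ a c : A,
      ∑ b : A, μ a b * (Fintype.card (b ⟶ c) : ℚ) = if a = c then 1 else 0)
    (hμ₂ : ∀ a c : A,
      ∑ b : A, (Fintype.card (a ⟶ b) : ℚ) * μ b c = if a = c then 1 else 0) :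
    ∀ a b : A, Fintype.card (a ⟶ b) = 0 → μ a b = 0 := by
  classical
  intro a b hab
  set Z : Matrix A A ℚ := fun x y => (Fintype.card (x ⟶ y) : ℚ) with hZ
  set M : Matrix A A ℚ := fun x y => μ x y with hM
  have hMZ : M * Z = 1 := by
    ext x y
    rw [Matrix.mul_apply]
    simpa [Matrix.one_apply, hZ, hM] using hμ₁ x y
  have hZM : Z * M = 1 := by
    ext x y
    rw [Matrix.mul_apply]
    simpa [Matrix.one_apply, hZ, hM] using hμ₂ x y
  let S : Submodule ℚ (Matrix A A ℚ) :=
    { carrier := {N | ∀ x y : A, Fintype.card (x ⟶ y) = 0 → N x y = 0}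
      add_mem' := fun h1 h2 x y h => by
        simp [Matrix.add_apply, h1 x y h, h2 x y h]
      zero_mem' := fun x y _ => rfl
      smul_mem' := fun c N hN x y h => by
        simp [Matrix.smul_apply, hN x y h] }
  have hmulS : ∀ N ∈ S, Z * N ∈ S := by
    intro N hN x y h
    rw [Matrix.mul_apply]
    apply Finset.sum_eq_zero
    intro c _
    by_cases hxc : Fintype.card (x ⟶ c) = 0
    · simp [hZ, hxc]
    · have hcy : Fintype.card (c ⟶ y) = 0 := by
        by_contra hcy
        have h1 : Nonempty (x ⟶ c) := Fintype.card_pos_iff.mp (Nat.pos_of_ne_zero hxc)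
        have h2 : Nonempty (c ⟶ y) := Fintype.card_pos_iff.mp (Nat.pos_of_ne_zero hcy)
        have h3 : Nonempty (x ⟶ y) := ⟨h1.some ≫ h2.some⟩
        rw [Fintype.card_eq_zero_iff] at h
        exact h.false h3.some
      rw [hN c y hcy, mul_zero]
  let L : S →ₗ[ℚ] S :=
    { toFun := fun N => ⟨Z * N.1, hmulS N.1 N.2⟩
      map_add' := fun N1 N2 => by
        ext : 1
        simp [Matrix.mul_add]
      map_smul' := fun c N => by
        ext : 1
        simp [Matrix.mul_smul] }
  have hLinj : Function.Injective L := by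
    intro N1 N2 h
    have h' : Z * N1.1 = Z * N2.1 := congrArg Subtype.val h
    have h'' := congrArg (fun X => M * X) h'
    simp only [← Matrix.mul_assoc, hMZ, one_mul] at h''
    exact Subtype.ext h''
  have hLsurj : Function.Surjective L := LinearMap.injective_iff_surjective.mp hLinj
  have h1S : (1 : Matrix A A ℚ) ∈ S := by
    intro x y h
    rw [Matrix.one_apply]
    split
    · next heq =>
      subst heq
      rw [Fintype.card_eq_zero_iff] at h
      exact absurd ⟨𝟙 x⟩ (not_nonempty_iff.mpr h)
    · rfl
  obtain ⟨N, hN⟩ := hLsurj ⟨1, h1S⟩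
  have hZN : Z * N.1 = 1 := congrArg Subtype.val hN
  have hMN : M = N.1 := by
    calc M = M * (Z * N.1) := by rw [hZN, mul_one]
    _ = (M * Z) * N.1 := by rw [Matrix.mul_assoc]
    _ = N.1 := by rw [hMZ, one_mul]
  have : M a b = 0 := hMN ▸ N.2 a b hab
  simpa [hM] using this
end

section
/- Let n ≥ 2 and let σ be a permutation of {1, …, n−1}. Then there exist k ≥ 1 and a finite sequence p_0, p_1, …, p_k of natural numbers such that p_0 = 1, p_k = n, p_1, …, p_{k−1} all lie in {1, …, n−1}, and p_r = σ(p_{r−1}) + 1 for each r ∈ {1, …, k}. -/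
/-!
Iterate `f x = σ x + 1` from `1`. As long as the orbit stays in `{1, …, n-1}` it is the orbit of
an injective map, and `1` is not a value of `f`. An orbit that never left a finite set on which
`f` is injective would be a finite `f`-invariant set, hence mapped onto itself, so it would
contain a preimage of its starting point. Hence the orbit leaves `{1, …, n-1}`, and since `f`
maps that set into `{2, …, n}`, the first point outside it is `n`.
-/

open Function Set

section Orbit

variable {α : Type*} {s : Set α} {f : α → α} {a : α}

theorem exists_iterate_notMem_of_injOn (hs : s.Finite) (hf : InjOn f s) (ha : a ∉ f '' s) :
    ∃ r, f^[r] a ∉ s := by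
  by_contra! horbit
  set t := range fun r => f^[r] a
  have hts : t ⊆ s := range_subset_iff.2 horbit
  have hmaps : MapsTo f t t := by
    rintro _ ⟨r, rfl⟩
    exact ⟨r + 1, iterate_succ_apply' f r a⟩
  have hsurj : SurjOn f t t :=
    ((hs.subset hts).injOn_iff_bijOn_of_mapsTo hmaps).1 (hf.mono hts) |>.surjOn
  obtain ⟨x, hxt, hx⟩ := hsurj ⟨0, rfl⟩
  exact ha ⟨x, hts hxt, hx⟩

theorem exists_iterate_eq_of_injOn_of_mapsTo_insert {b : α} (hs : s.Finite) (hf : InjOn f s)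
    (hmaps : MapsTo f s (insert b s)) (ha : a ∈ s) (ha' : a ∉ f '' s) :
    ∃ k, 1 ≤ k ∧ f^[k] a = b ∧ ∀ r < k, f^[r] a ∈ s := by
  classical
  have hexit := exists_iterate_notMem_of_injOn hs hf ha'
  set k := Nat.find hexit
  have hk : f^[k] a ∉ s := Nat.find_spec hexit
  have hbefore : ∀ r < k, f^[r] a ∈ s := fun r hr => not_not.1 (Nat.find_min hexit hr)
  have hk1 : 1 ≤ k := Nat.one_le_iff_ne_zero.2 fun h0 => hk (by rwa [h0])
  have hlast : f^[k] a ∈ insert b s := by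
    rw [← Nat.sub_add_cancel hk1, iterate_succ_apply']
    exact hmaps (hbefore _ (Nat.sub_one_lt_of_lt hk1))
  exact ⟨k, hk1, (mem_insert_iff.1 hlast).resolve_right hk, hbefore⟩

end Orbit

/-- **Lemma 4.2** (Leinster). Let `n ≥ 2` and let `σ` be a permutation of
`{1, …, n-1}`.  Then there exist `k ≥ 1` and `p₀, …, p_k` with `p₀ = 1`,
`p_k = n`, `p₁, …, p_{k-1} ∈ {1, …, n-1}`, and `p_r = σ(p_{r-1}) + 1` for each
`r ∈ {1, …, k}`. -/
theorem stmt_17 (n : ℕ) (hn : 2 ≤ n) (σ : ℕ → ℕ)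
    (hσ : Set.BijOn σ (Set.Icc 1 (n - 1)) (Set.Icc 1 (n - 1))) :
    ∃ (k : ℕ), 1 ≤ k ∧ ∃ p : ℕ → ℕ,
      p 0 = 1 ∧ p k = n ∧
      (∀ r, 1 ≤ r → r ≤ k - 1 → p r ∈ Set.Icc 1 (n - 1)) ∧
      (∀ r, 1 ≤ r → r ≤ k → p r = σ (p (r - 1)) + 1) := by
  set f : ℕ → ℕ := fun x => σ x + 1
  have hinj : InjOn f (Icc 1 (n - 1)) := fun x hx y hy hxy =>
    hσ.injOn hx hy (Nat.add_right_cancel hxy)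
  have hmaps : MapsTo f (Icc 1 (n - 1)) (insert n (Icc 1 (n - 1))) := fun x hx => by
    have := hσ.mapsTo hx
    simp only [f, mem_insert_iff, mem_Icc] at this ⊢
    omega
  have hone : 1 ∈ Icc 1 (n - 1) := ⟨le_rfl, by omega⟩
  have hone_image : 1 ∉ f '' Icc 1 (n - 1) := by
    rintro ⟨x, hx, hfx⟩
    exact Nat.one_le_iff_ne_zero.1 (hσ.mapsTo hx).1 (Nat.succ_injective hfx)
  obtain ⟨k, hk1, hkn, hbefore⟩ :=
    exists_iterate_eq_of_injOn_of_mapsTo_insert (finite_Icc _ _) hinj hmaps hone hone_image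
  refine ⟨k, hk1, fun r => f^[r] 1, rfl, hkn, fun r _ hr => hbefore r (by omega), ?_⟩
  intro r hr _
  obtain ⟨j, rfl⟩ := Nat.exists_eq_add_of_le' hr
  exact iterate_succ_apply' f j 1
end

section
/- Let A and B be finite categories, each having Möbius inversion, with Möbius functions μ_A and μ_B. Let F : A → B and G : B → A be functors with F left adjoint to G. Then for every object a of A and every object b of B, ∑_{a' : Fa' = b} μ_A(a, a') = ∑_{b' : Gb' = a} μ_B(b', b), where the left sum is over objects a' of A with Fa' = b and the right sum is over objects b' of B with Gb' = a. -/
open CategoryTheory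

namespace Matrix

variable {α β R : Type*} [Fintype α] [Fintype β] [DecidableEq α] [DecidableEq β] [Semiring R]

/-- Both sides are the `(a, b)` entry of `μα * M * μβ`, where `M x y = ζα x (g y) = ζβ (f x) y`. -/
theorem sum_ite_fiber_eq_of_mul_eq_one (f : α → β) (g : β → α)
    {ζα μα : Matrix α α R} {ζβ μβ : Matrix β β R} (hα : μα * ζα = 1) (hβ : ζβ * μβ = 1)
    (hζ : ∀ x y, ζβ (f x) y = ζα x (g y)) (a : α) (b : β) :
    ∑ x, (if f x = b then μα a x else 0) = ∑ y, (if g y = a then μβ y b else 0) := by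
  have hleft : μα * ζα.submatrix id g = (1 : Matrix α α R).submatrix id g := by
    rw [← hα]; rfl
  have hright : ζα.submatrix id g * μβ = (1 : Matrix β β R).submatrix f id := by
    rw [← hβ]; ext x y; simp only [mul_apply, submatrix_apply, id, hζ]
  have key := congrFun (congrFun (Matrix.mul_assoc μα (ζα.submatrix id g) μβ) a) b
  rw [hleft, hright] at key
  simpa [mul_apply, one_apply, eq_comm] using key.symm

end Matrix

namespace CategoryTheory

variable (C : Type*) [Category C] [∀ a b : C, Fintype (a ⟶ b)]

def homCardMatrix : Matrix C C ℚ :=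
  Matrix.of fun a b => Fintype.card (a ⟶ b)

variable {C}

theorem Adjunction.card_hom_eq {D : Type*} [Category D] [∀ a b : D, Fintype (a ⟶ b)]
    {F : C ⥤ D} {G : D ⥤ C} (adj : F ⊣ G) (a : C) (b : D) :
    Fintype.card (F.obj a ⟶ b) = Fintype.card (a ⟶ G.obj b) :=
  Fintype.card_congr (adj.homEquiv a b)

end CategoryTheory

open scoped Classical in
/-- **Proposition 4.4** (Leinster, generalizing Rota's main theorem on Galois
connections). Let `A`, `B` be finite categories with Möbius inversion and let
`F ⊣ G` be an adjunction between them.  Then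
`∑_{a' : Fa' = b} μ_A(a, a') = ∑_{b' : Gb' = a} μ_B(b', b)` for all `a`, `b`. -/
theorem stmt_18 {A : Type u₁} [Category.{v₁} A] [Fintype A]
    [∀ a b : A, Fintype (a ⟶ b)]
    {B : Type u₂} [Category.{v₂} B] [Fintype B]
    [∀ a b : B, Fintype (a ⟶ b)]
    (μA : A → A → ℚ)
    (hμA₁ : ∀ a c : A,
      ∑ b : A, μA a b * (Fintype.card (b ⟶ c) : ℚ) = if a = c then 1 else 0)
    (hμA₂ : ∀ a c : A,
      ∑ b : A, (Fintype.card (a ⟶ b) : ℚ) * μA b c = if a = c then 1 else 0)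
    (μB : B → B → ℚ)
    (hμB₁ : ∀ a c : B,
      ∑ b : B, μB a b * (Fintype.card (b ⟶ c) : ℚ) = if a = c then 1 else 0)
    (hμB₂ : ∀ a c : B,
      ∑ b : B, (Fintype.card (a ⟶ b) : ℚ) * μB b c = if a = c then 1 else 0)
    (F : A ⥤ B) (G : B ⥤ A) (adj : F ⊣ G) :
    ∀ (a : A) (b : B),
      ∑ a' : A, (if F.obj a' = b then μA a a' else 0) =
        ∑ b' : B, (if G.obj b' = a then μB b' b else 0) := by
  have hA : Matrix.of μA * homCardMatrix A = 1 := by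
    ext a c; simpa [Matrix.mul_apply, Matrix.one_apply, homCardMatrix] using hμA₁ a c
  have hB : homCardMatrix B * Matrix.of μB = 1 := by
    ext a c; simpa [Matrix.mul_apply, Matrix.one_apply, homCardMatrix] using hμB₂ a c
  intro a b
  exact Matrix.sum_ite_fiber_eq_of_mul_eq_one F.obj G.obj hA hB
    (fun a' b' => by simp [homCardMatrix, adj.card_hom_eq a' b']) a b
end
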